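/- Let G be a sum of flowers of the form *nᵢ : aᵢ (nᵢ ≥ 1, aᵢ dyadic rationals). Let ℓ be the number of blue flowers (those with aᵢ > 0) and r the number of red flowers (those with aᵢ < 0). Then under normal play: if ℓ − r ≥ 2 then G is a Left win; if ℓ − r ≥ 1 then Left wins moving first; if ℓ − r ≤ −1 then Right wins moving first; if ℓ − r ≤ −2 then G is a Right win. -/

import Mathlib

namespace SetTheory

universe w

/-- Pre-games (formerly `SetTheory.PGame` in Mathlib, removed since). -/
inductive PGame : Type (w + 1)
  | mk : ∀ α β : Type w, (α → PGame) → (β → PGame) → PGame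

namespace PGame

def LeftMoves : PGame → Type w
  | mk l _ _ _ => l

def RightMoves : PGame → Type w
  | mk _ r _ _ => r

def moveLeft : ∀ g : PGame, LeftMoves g → PGame
  | mk _ _ L _ => L

def moveRight : ∀ g : PGame, RightMoves g → PGame
  | mk _ _ _ R => R

inductive IsOption : PGame → PGame → Prop
  | moveLeft {x : PGame} (i : x.LeftMoves) : IsOption (x.moveLeft i) x
  | moveRight {x : PGame} (i : x.RightMoves) : IsOption (x.moveRight i) x

theorem wf_isOption : WellFounded IsOption :=
  ⟨fun x => by
    induction x with
    | mk l r L R IHl IHr =>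
      refine Acc.intro _ fun y h => ?_
      cases h with
      | moveLeft i => exact IHl i
      | moveRight j => exact IHr j⟩

def Subsequent : PGame → PGame → Prop :=
  Relation.TransGen IsOption

theorem wf_subsequent : WellFounded Subsequent :=
  wf_isOption.transGen

instance : WellFoundedRelation PGame :=
  ⟨Subsequent, wf_subsequent⟩

theorem Subsequent.moveLeft (x : PGame) (i : x.LeftMoves) : Subsequent (x.moveLeft i) x :=
  Relation.TransGen.single (IsOption.moveLeft i)

theorem Subsequent.moveRight (x : PGame) (j : x.RightMoves) : Subsequent (x.moveRight j) x :=
  Relation.TransGen.single (IsOption.moveRight j)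

instance : Zero PGame :=
  ⟨⟨PEmpty, PEmpty, PEmpty.elim, PEmpty.elim⟩⟩

def star : PGame.{w} :=
  ⟨PUnit, PUnit, fun _ => 0, fun _ => 0⟩

instance le : LE PGame :=
  ⟨fun a b => Sym2.GameAdd.recursion (C := fun _ _ => Prop) wf_isOption (fun x y le =>
      (∀ i, ¬le y (x.moveLeft i) (Sym2.GameAdd.snd_fst <| IsOption.moveLeft i)) ∧
        ∀ j, ¬le (y.moveRight j) x (Sym2.GameAdd.fst_snd <| IsOption.moveRight j)) a b⟩

def LF (x y : PGame) : Prop :=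
  ¬y ≤ x

infix:50 " ⧏ " => SetTheory.PGame.LF

instance : LT PGame :=
  ⟨fun x y => x ≤ y ∧ x ⧏ y⟩

def Numeric : PGame → Prop
  | ⟨_, _, L, R⟩ => (∀ i j, L i < R j) ∧ (∀ i, Numeric (L i)) ∧ ∀ j, Numeric (R j)

inductive Short : PGame.{w} → Type (w + 1)
  | mk : ∀ {α β : Type w} {L : α → PGame.{w}} {R : β → PGame.{w}} (_ : ∀ i : α, Short (L i))
      (_ : ∀ j : β, Short (R j)) [Fintype α] [Fintype β], Short ⟨α, β, L, R⟩

def neg : PGame → PGame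
  | ⟨l, r, L, R⟩ => ⟨r, l, fun i => neg (R i), fun i => neg (L i)⟩

instance : Neg PGame :=
  ⟨neg⟩

/-- `addRight xl xr IHl IHr y` is `x + y` for `x = mk xl xr _ _`, given `IHl i = (xL i + ·)`
and `IHr j = (xR j + ·)`. -/
def addRight (xl xr : Type w) (IHl : xl → PGame.{w} → PGame.{w})
    (IHr : xr → PGame.{w} → PGame.{w}) : PGame.{w} → PGame.{w}
  | mk yl yr yL yR =>
    mk (xl ⊕ yl) (xr ⊕ yr)
      (Sum.elim (fun i => IHl i (mk yl yr yL yR)) fun i => addRight xl xr IHl IHr (yL i))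
      (Sum.elim (fun i => IHr i (mk yl yr yL yR)) fun i => addRight xl xr IHl IHr (yR i))

def add : PGame.{w} → PGame.{w} → PGame.{w}
  | mk xl xr xL xR => addRight xl xr (fun i => add (xL i)) (fun i => add (xR i))

instance : Add PGame :=
  ⟨add⟩

instance : Sub PGame :=
  ⟨fun x y => x + -y⟩

noncomputable def nim (o : Ordinal.{w}) : PGame.{w} :=
  ⟨o.ToType, o.ToType, fun x => nim (Ordinal.ToType.mk.symm x).1,
    fun x => nim (Ordinal.ToType.mk.symm x).1⟩
termination_by o
decreasing_by all_goals exact (Ordinal.ToType.mk.symm _).2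

end PGame

/-- Nimbers (formerly `Nimber` in Mathlib, removed since): a type synonym for ordinals. -/
def _root_.Nimber : Type (w + 1) :=
  Ordinal.{w}

noncomputable instance : One Nimber :=
  inferInstanceAs (One Ordinal)

noncomputable instance : ConditionallyCompleteLinearOrderBot Nimber :=
  inferInstanceAs (ConditionallyCompleteLinearOrderBot Ordinal)

end SetTheory

open SetTheory PGame

universe u

/-- The four outcome classes of a combinatorial game. -/
inductive Outcome : Type
  | L | N | P | R
deriving DecidableEq

/-- The partial order on outcomes: `R` least, `L` greatest, `N` and `P` incomparable. -/
def Outcome.leB : Outcome → Outcome → Bool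
  | .R, _ => true
  | _, .L => true
  | .N, .N => true
  | .P, .P => true
  | _, _ => false

instance : PartialOrder Outcome where
  le a b := Outcome.leB a b = true
  le_refl a := by cases a <;> rfl
  le_trans a b c := by cases a <;> cases b <;> cases c <;> simp [Outcome.leB]
  le_antisymm a b := by cases a <;> cases b <;> simp [Outcome.leB]

/-- `misereWins true G` : Left, moving first, wins `G` under misère play;
`misereWins false G` : Right, moving first, wins `G` under misère play.
(Under misère play, a player who cannot move wins.) -/
def misereWins : Bool → SetTheory.PGame.{u} → Prop
  | true, G => IsEmpty G.LeftMoves ∨ ∃ i, ¬ misereWins false (G.moveLeft i)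
  | false, G => IsEmpty G.RightMoves ∨ ∃ j, ¬ misereWins true (G.moveRight j)
termination_by _ G => G
decreasing_by all_goals first | apply Subsequent.moveLeft | apply Subsequent.moveRight

/-- Build an outcome class from the propositions "Left moving first wins" and
"Right moving first wins". -/
noncomputable def outcomeOf (LF RF : Prop) : Outcome := by
  classical exact if LF then (if RF then .N else .L) else (if RF then .R else .P)

/-- The normal-play outcome `o⁺(G)` of a game. -/
noncomputable def normalOutcome (G : PGame) : Outcome :=
  outcomeOf (¬ G ≤ 0) (¬ 0 ≤ G)

/-- The misère-play outcome `o⁻(G)` of a game. -/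
noncomputable def misereOutcome (G : PGame) : Outcome :=
  outcomeOf (misereWins true G) (misereWins false G)

/-- The ordinal sum `G : H` of two games: either move in `G` (destroying the `H` part),
or move in `H` keeping the base `G`. -/
def ordinalSum (G : PGame.{u}) : PGame.{u} → PGame.{u}
  | H => PGame.mk (G.LeftMoves ⊕ H.LeftMoves) (G.RightMoves ⊕ H.RightMoves)
      (Sum.elim G.moveLeft fun i => ordinalSum G (H.moveLeft i))
      (Sum.elim G.moveRight fun j => ordinalSum G (H.moveRight j))
termination_by H => H
decreasing_by all_goals first | apply Subsequent.moveLeft | apply Subsequent.moveRight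

/-- The game `↑` (up) `= {0 | *}`. -/
def up : PGame.{u} := ⟨PUnit, PUnit, fun _ => 0, fun _ => star⟩

/-- `n` copies of `↑` added together. -/
def nUp : ℕ → PGame.{u}
  | 0 => 0
  | n + 1 => nUp n + up

/-- The integer multiple `w·↑`. -/
def upMul : ℤ → PGame.{u}
  | .ofNat k => nUp k
  | .negSucc k => -(nUp (k + 1))

/-- Finite disjunctive sum of a family of games. -/
def psum : {k : ℕ} → (Fin k → PGame.{u}) → PGame.{u}
  | 0, _ => 0
  | k + 1, f => psum (fun i : Fin k => f i.castSucc) + f (Fin.last k)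

/-- The superstar `{*x₁, …, *xₙ}`: the impartial game whose Left and Right options are
exactly the nimbers `*xᵢ`. -/
noncomputable def superstar {n : ℕ} (x : Fin n → ℕ) : PGame :=
  ⟨Fin n, Fin n, fun i => nim (x i), fun i => nim (x i)⟩

/-- The minimum excludant of a set of naturals. -/
noncomputable def setMex (S : Set ℕ) : ℕ := sInf {n | n ∉ S}

/-- Iterated XOR (nim-sum) of a finite family of naturals. -/
def xorSum : {k : ℕ} → (Fin k → ℕ) → ℕ
  | 0, _ => 0
  | k + 1, f => xorSum (fun i : Fin k => f i.castSucc) ^^^ f (Fin.last k)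

/-- A set of naturals is star-closed if it is closed under XOR with 1. -/
def StarClosedN (S : Set ℕ) : Prop := ∀ a ∈ S, a ^^^ 1 ∈ S

/-- `G` is all-small (dicotic): in every subposition, either both players can move
or neither can. -/
def AllSmall (G : PGame) : Prop :=
  (Nonempty G.LeftMoves ↔ Nonempty G.RightMoves) ∧
    ∀ p, Subsequent p G → (Nonempty p.LeftMoves ↔ Nonempty p.RightMoves)

/-- `G` has (integer) atomic weight `w`, via the remote-star characterization:
for all sufficiently remote `N`, `*N + ↓ < G - w·↑ < *N + ↑`. -/
def HasIntAtomicWeight (G : PGame) (w : ℤ) : Prop :=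
  ∃ N₀ : ℕ, ∀ N : ℕ, N₀ ≤ N →
    nim N + (-up) < G - upMul w ∧ G - upMul w < nim N + up

open Classical in
/-- The misère Grundy value of an (impartial) game: the mex of the misère Grundy values
of its options, except that the empty game has misère Grundy value `1`. -/
noncomputable def misereGrundy : PGame.{u} → Nimber.{u}
  | G =>
    if IsEmpty G.LeftMoves then 1
    else sInf (Set.range fun i => misereGrundy (G.moveLeft i))ᶜ
termination_by G => G
decreasing_by all_goals first | apply Subsequent.moveLeft | apply Subsequent.moveRight

/-- A set of games closed under disjunctive sum and under taking subpositions. -/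
def SClosed (A : Set PGame) : Prop :=
  (∀ G ∈ A, ∀ H ∈ A, G + H ∈ A) ∧ ∀ G ∈ A, ∀ G', Subsequent G' G → G' ∈ A

/-- `K` is an evil kernel of `A`: setting `G* = G` for `G ∈ K` and `G* = G + *` otherwise,
one has `o⁺(G) = o⁻(G*)` and `o⁻(G) = o⁺(G*)` for all `G ∈ A`. -/
def IsEvilKernel (A K : Set PGame) : Prop :=
  K ⊆ A ∧ ∀ G ∈ A,
    (G ∈ K → normalOutcome G = misereOutcome G ∧ misereOutcome G = normalOutcome G) ∧
    (G ∉ K → normalOutcome G = misereOutcome (G + star) ∧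
      misereOutcome G = normalOutcome (G + star))

/-- `(A, K)` is evilly normal: `A` is closed, `K` is an evil kernel of `A`, and
`G + H ∉ K ↔ (G ∉ K ∧ H ∉ K)` for all `G, H ∈ A`. -/
def EvillyNormal (A K : Set PGame) : Prop :=
  SClosed A ∧ IsEvilKernel A K ∧ ∀ G ∈ A, ∀ H ∈ A, (G + H ∉ K ↔ G ∉ K ∧ H ∉ K)

/-- Normal-play equality of games: `G` and `H` have the same normal-play outcome in
every sum. -/
def NormalEq (G H : PGame) : Prop := ∀ X, normalOutcome (G + X) = normalOutcome (H + X)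


namespace SetTheory.PGame

theorem le_iff_forall_not {x y : PGame.{u}} :
    x ≤ y ↔ (∀ i, ¬ y ≤ x.moveLeft i) ∧ ∀ j, ¬ y.moveRight j ≤ x := by
  show Sym2.GameAdd.recursion _ _ x y ↔ _
  rw [Sym2.GameAdd.recursion_eq]
  exact Iff.rfl

theorem not_le {x y : PGame.{u}} : ¬ x ≤ y ↔ y ⧏ x := Iff.rfl

theorem lf_of_le_moveLeft {x y : PGame.{u}} {i : y.LeftMoves} (h : x ≤ y.moveLeft i) : x ⧏ y :=
  fun h' => (le_iff_forall_not.1 h').1 i h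

theorem lf_of_moveRight_le {x y : PGame.{u}} {j : x.RightMoves} (h : x.moveRight j ≤ y) :
    x ⧏ y :=
  fun h' => (le_iff_forall_not.1 h').2 j h

theorem lf_iff_exists_le {x y : PGame.{u}} :
    x ⧏ y ↔ (∃ i, x ≤ y.moveLeft i) ∨ ∃ j, x.moveRight j ≤ y := by
  unfold LF
  rw [le_iff_forall_not]
  constructor
  · intro h
    by_contra hc
    push_neg at hc
    exact h ⟨fun i => hc.1 i, fun j => hc.2 j⟩
  · rintro (⟨i, hi⟩ | ⟨j, hj⟩) h
    · exact h.1 i hi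
    · exact h.2 j hj

theorem le_refl' : ∀ x : PGame.{u}, x ≤ x
  | mk _ _ _ _ => le_iff_forall_not.2
      ⟨fun i => lf_of_le_moveLeft (le_refl' _), fun j => lf_of_moveRight_le (le_refl' _)⟩

theorem le_trans_aux {x y z : PGame.{u}}
    (h₁ : ∀ {i}, y ≤ z → z ≤ x.moveLeft i → y ≤ x.moveLeft i)
    (h₂ : ∀ {j}, z.moveRight j ≤ x → x ≤ y → z.moveRight j ≤ y) (hxy : x ≤ y) (hyz : y ≤ z) :
    x ≤ z :=
  le_iff_forall_not.2
    ⟨fun i h => (le_iff_forall_not.1 hxy).1 i (h₁ hyz h),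
      fun j h => (le_iff_forall_not.1 hyz).2 j (h₂ h hxy)⟩

theorem le_trans3 {x y z : PGame.{u}} :
    (x ≤ y → y ≤ z → x ≤ z) ∧ (y ≤ z → z ≤ x → y ≤ x) ∧ (z ≤ x → x ≤ y → z ≤ y) := by
  induction x generalizing y z with
  | mk xl xr xL xR IHxl IHxr =>
  induction y generalizing z with
  | mk yl yr yL yR IHyl IHyr =>
  induction z with
  | mk zl zr zL zR IHzl IHzr =>
  exact ⟨le_trans_aux (fun {i} => (IHxl i).2.1) fun {j} => (IHzr j).2.2,
    le_trans_aux (fun {i} => (IHyl i).2.2) fun {j} => (IHxr j).1,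
    le_trans_aux (fun {i} => (IHzl i).1) fun {j} => (IHyr j).2.1⟩

instance : Preorder PGame.{u} where
  le := (· ≤ ·)
  lt := (· < ·)
  le_refl := le_refl'
  le_trans _ _ _ := le_trans3.1
  lt_iff_le_not_ge _ _ := Iff.rfl

theorem moveLeft_lf {x : PGame.{u}} (i : x.LeftMoves) : x.moveLeft i ⧏ x :=
  (le_iff_forall_not.1 (le_refl x)).1 i

theorem lf_moveRight {x : PGame.{u}} (j : x.RightMoves) : x ⧏ x.moveRight j :=
  (le_iff_forall_not.1 (le_refl x)).2 j

theorem lf_of_lt {x y : PGame.{u}} (h : x < y) : x ⧏ y := h.2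

theorem lt_iff_le_and_lf {x y : PGame.{u}} : x < y ↔ x ≤ y ∧ x ⧏ y := Iff.rfl

instance isEmpty_zero_leftMoves : IsEmpty (LeftMoves (0 : PGame.{u})) :=
  inferInstanceAs (IsEmpty PEmpty)

instance isEmpty_zero_rightMoves : IsEmpty (RightMoves (0 : PGame.{u})) :=
  inferInstanceAs (IsEmpty PEmpty)

theorem zero_le_lf {x : PGame.{u}} : 0 ≤ x ↔ ∀ j, 0 ⧏ x.moveRight j := by
  rw [le_iff_forall_not]; simp [LF]

theorem le_zero_lf {x : PGame.{u}} : x ≤ 0 ↔ ∀ i, x.moveLeft i ⧏ 0 := by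
  rw [le_iff_forall_not]; simp [LF]

theorem zero_lf_le {x : PGame.{u}} : 0 ⧏ x ↔ ∃ i, 0 ≤ x.moveLeft i := by
  unfold LF; rw [le_iff_forall_not]; simp

theorem lf_zero_le {x : PGame.{u}} : x ⧏ 0 ↔ ∃ j, x.moveRight j ≤ 0 := by
  unfold LF; rw [le_iff_forall_not]; simp

/-! Numeric games -/

theorem numeric_def {x : PGame.{u}} : Numeric x ↔ (∀ i j, x.moveLeft i < x.moveRight j) ∧
    (∀ i, Numeric (x.moveLeft i)) ∧ ∀ j, Numeric (x.moveRight j) := by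
  cases x; exact Iff.rfl

theorem Numeric.moveLeft {x : PGame.{u}} (o : Numeric x) (i : x.LeftMoves) :
    Numeric (x.moveLeft i) := (numeric_def.1 o).2.1 i

theorem Numeric.moveRight {x : PGame.{u}} (o : Numeric x) (j : x.RightMoves) :
    Numeric (x.moveRight j) := (numeric_def.1 o).2.2 j

theorem numeric_zero : Numeric (0 : PGame.{u}) :=
  numeric_def.2 ⟨fun i => isEmptyElim i, fun i => isEmptyElim i, fun j => isEmptyElim j⟩

theorem lf_asymm_aux : ∀ {x : PGame.{u}}, Numeric x → ∀ {y : PGame.{u}}, Numeric y →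
    x ⧏ y → ¬ y ⧏ x
  | mk xl xr xL xR, ox, y, oy, h₁, h₂ => by
    rcases lf_iff_exists_le.1 h₁ with ⟨i, h₁⟩ | ⟨j, h₁⟩ <;>
      rcases lf_iff_exists_le.1 h₂ with ⟨i', h₂⟩ | ⟨j', h₂⟩
    · exact lf_asymm_aux (ox.moveLeft i') (oy.moveLeft i)
        ((le_iff_forall_not.1 h₁).1 i') ((le_iff_forall_not.1 h₂).1 i)
    · exact ((numeric_def.1 oy).1 i j').2 (le_trans h₂ h₁)
    · exact ((numeric_def.1 ox).1 i' j).2 (le_trans h₁ h₂)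
    · exact lf_asymm_aux (ox.moveRight j) (oy.moveRight j')
        ((le_iff_forall_not.1 h₁).2 j') ((le_iff_forall_not.1 h₂).2 j)

theorem lf_iff_lt {x y : PGame.{u}} (ox : Numeric x) (oy : Numeric y) : x ⧏ y ↔ x < y :=
  ⟨fun h => ⟨by by_contra hn; exact lf_asymm_aux ox oy h hn, h⟩, lf_of_lt⟩

theorem Numeric.moveLeft_lt {x : PGame.{u}} (o : Numeric x) (i : x.LeftMoves) :
    x.moveLeft i < x := (lf_iff_lt (o.moveLeft i) o).1 (moveLeft_lf i)

theorem Numeric.lt_moveRight {x : PGame.{u}} (o : Numeric x) (j : x.RightMoves) :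
    x < x.moveRight j := (lf_iff_lt o (o.moveRight j)).1 (lf_moveRight j)

/-! Nim -/

theorem nim_def (o : Ordinal.{u}) : nim o = ⟨o.ToType, o.ToType,
    fun x => nim (Ordinal.ToType.mk.symm x).1, fun x => nim (Ordinal.ToType.mk.symm x).1⟩ := by
  rw [nim]

theorem moveLeft_cast {x y : PGame.{u}} (e : x = y) (i : x.LeftMoves) :
    x.moveLeft i = y.moveLeft (cast (congrArg LeftMoves e) i) := by subst e; rfl

theorem moveRight_cast {x y : PGame.{u}} (e : x = y) (j : x.RightMoves) :
    x.moveRight j = y.moveRight (cast (congrArg RightMoves e) j) := by subst e; rfl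

noncomputable def toLeftMovesNim {o : Ordinal.{u}} : Set.Iio o ≃ (nim o).LeftMoves :=
  Ordinal.ToType.mk.toEquiv.trans (Equiv.cast (congrArg LeftMoves (nim_def o)).symm)

noncomputable def toRightMovesNim {o : Ordinal.{u}} : Set.Iio o ≃ (nim o).RightMoves :=
  Ordinal.ToType.mk.toEquiv.trans (Equiv.cast (congrArg RightMoves (nim_def o)).symm)

theorem toLeftMovesNim_symm_lt {o : Ordinal.{u}} (i : (nim o).LeftMoves) :
    (toLeftMovesNim.symm i : Ordinal) < o := (toLeftMovesNim.symm i).2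

theorem toRightMovesNim_symm_lt {o : Ordinal.{u}} (j : (nim o).RightMoves) :
    (toRightMovesNim.symm j : Ordinal) < o := (toRightMovesNim.symm j).2

theorem moveLeft_nim' {o : Ordinal.{u}} (i : (nim o).LeftMoves) :
    (nim o).moveLeft i = nim (toLeftMovesNim.symm i : Ordinal) := by
  rw [moveLeft_cast (nim_def o)]; rfl

theorem moveRight_nim' {o : Ordinal.{u}} (j : (nim o).RightMoves) :
    (nim o).moveRight j = nim (toRightMovesNim.symm j : Ordinal) := by
  rw [moveRight_cast (nim_def o)]; rfl

theorem moveLeft_nim {o : Ordinal.{u}} (i : Set.Iio o) :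
    (nim o).moveLeft (toLeftMovesNim i) = nim i := by
  rw [moveLeft_nim', Equiv.symm_apply_apply]

theorem moveRight_nim {o : Ordinal.{u}} (j : Set.Iio o) :
    (nim o).moveRight (toRightMovesNim j) = nim j := by
  rw [moveRight_nim', Equiv.symm_apply_apply]

/-! Sums -/

def toLeftMovesAdd {x y : PGame.{u}} : x.LeftMoves ⊕ y.LeftMoves ≃ (x + y).LeftMoves := by
  cases x; cases y; exact Equiv.refl _

def toRightMovesAdd {x y : PGame.{u}} : x.RightMoves ⊕ y.RightMoves ≃ (x + y).RightMoves := by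
  cases x; cases y; exact Equiv.refl _

theorem add_moveLeft_inl {x y : PGame.{u}} (i : x.LeftMoves) :
    (x + y).moveLeft (toLeftMovesAdd (Sum.inl i)) = x.moveLeft i + y := by
  cases x; cases y; rfl

theorem add_moveLeft_inr {x y : PGame.{u}} (i : y.LeftMoves) :
    (x + y).moveLeft (toLeftMovesAdd (Sum.inr i)) = x + y.moveLeft i := by
  cases x; cases y; rfl

theorem add_moveRight_inl {x y : PGame.{u}} (j : x.RightMoves) :
    (x + y).moveRight (toRightMovesAdd (Sum.inl j)) = x.moveRight j + y := by
  cases x; cases y; rfl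

theorem add_moveRight_inr {x y : PGame.{u}} (j : y.RightMoves) :
    (x + y).moveRight (toRightMovesAdd (Sum.inr j)) = x + y.moveRight j := by
  cases x; cases y; rfl

/-! Equivalence -/

def Equiv (x y : PGame.{u}) : Prop := x ≤ y ∧ y ≤ x

instance : HasEquiv PGame.{u} := ⟨Equiv⟩

theorem equiv_rfl {x : PGame.{u}} : x ≈ x := ⟨le_refl x, le_refl x⟩

theorem Equiv.symm {x y : PGame.{u}} (h : x ≈ y) : y ≈ x := ⟨h.2, h.1⟩

theorem Equiv.trans {x y z : PGame.{u}} (h₁ : x ≈ y) (h₂ : y ≈ z) : x ≈ z :=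
  ⟨le_trans h₁.1 h₂.1, le_trans h₂.2 h₁.2⟩

theorem lf_congr_left {x₁ x₂ y : PGame.{u}} (h : x₁ ≈ x₂) : x₁ ⧏ y ↔ x₂ ⧏ y :=
  ⟨fun h' h'' => h' (le_trans h'' h.2), fun h' h'' => h' (le_trans h'' h.1)⟩

theorem lf_congr_right {x y₁ y₂ : PGame.{u}} (h : y₁ ≈ y₂) : x ⧏ y₁ ↔ x ⧏ y₂ :=
  ⟨fun h' h'' => h' (le_trans h.1 h''), fun h' h'' => h' (le_trans h.2 h'')⟩

theorem lt_congr_left {x₁ x₂ y : PGame.{u}} (h : x₁ ≈ x₂) : x₁ < y ↔ x₂ < y :=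
  ⟨fun h' => ⟨le_trans h.2 h'.1, (lf_congr_left h).1 h'.2⟩,
    fun h' => ⟨le_trans h.1 h'.1, (lf_congr_left h).2 h'.2⟩⟩

theorem lt_congr_right {x y₁ y₂ : PGame.{u}} (h : y₁ ≈ y₂) : x < y₁ ↔ x < y₂ :=
  ⟨fun h' => ⟨le_trans h'.1 h.1, (lf_congr_right h).1 h'.2⟩,
    fun h' => ⟨le_trans h'.1 h.2, (lf_congr_right h).2 h'.2⟩⟩

/-- Identity of games up to relabeling of moves. -/
inductive Iso : PGame.{u} → PGame.{u} → Prop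
  | mk {x y : PGame.{u}} (eL : x.LeftMoves ≃ y.LeftMoves) (eR : x.RightMoves ≃ y.RightMoves)
      (hL : ∀ i, Iso (x.moveLeft i) (y.moveLeft (eL i)))
      (hR : ∀ j, Iso (x.moveRight j) (y.moveRight (eR j))) : Iso x y

theorem Iso.equiv {x y : PGame.{u}} (h : Iso x y) : x ≈ y := by
  induction h with
  | mk eL eR hL hR IHL IHR =>
    refine ⟨le_iff_forall_not.2 ⟨fun i => lf_of_le_moveLeft (IHL i).1, fun j => ?_⟩,
      le_iff_forall_not.2 ⟨fun i => ?_, fun j => lf_of_moveRight_le (IHR j).2⟩⟩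
    · obtain ⟨j, rfl⟩ := eR.surjective j
      exact lf_of_moveRight_le (IHR j).1
    · obtain ⟨i, rfl⟩ := eL.surjective i
      exact lf_of_le_moveLeft (IHL i).2

theorem iso_add_zero : ∀ x : PGame.{u}, Iso (x + 0) x
  | mk xl xr xL xR => by
    refine Iso.mk (Equiv.sumEmpty xl PEmpty) (Equiv.sumEmpty xr PEmpty) ?_ ?_
    · rintro (i | i)
      · exact iso_add_zero (xL i)
      · exact i.elim
    · rintro (j | j)
      · exact iso_add_zero (xR j)
      · exact j.elim

theorem iso_zero_add : ∀ x : PGame.{u}, Iso (0 + x) x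
  | mk xl xr xL xR => by
    refine Iso.mk (Equiv.emptySum PEmpty xl) (Equiv.emptySum PEmpty xr) ?_ ?_
    · rintro (i | i)
      · exact i.elim
      · exact iso_zero_add (xL i)
    · rintro (j | j)
      · exact j.elim
      · exact iso_zero_add (xR j)

theorem iso_add_assoc (x y z : PGame.{u}) : Iso (x + y + z) (x + (y + z)) := by
  induction x generalizing y z with
  | mk xl xr xL xR IHxl IHxr =>
  induction y generalizing z with
  | mk yl yr yL yR IHyl IHyr =>
  induction z with
  | mk zl zr zL zR IHzl IHzr =>
  refine Iso.mk (Equiv.sumAssoc _ _ _) (Equiv.sumAssoc _ _ _) ?_ ?_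
  · rintro ((i | i) | i)
    · exact IHxl i (mk yl yr yL yR) (mk zl zr zL zR)
    · exact IHyl i (mk zl zr zL zR)
    · exact IHzl i
  · rintro ((j | j) | j)
    · exact IHxr j (mk yl yr yL yR) (mk zl zr zL zR)
    · exact IHyr j (mk zl zr zL zR)
    · exact IHzr j

theorem iso_add_comm (x y : PGame.{u}) : Iso (x + y) (y + x) := by
  induction x generalizing y with
  | mk xl xr xL xR IHxl IHxr =>
  induction y with
  | mk yl yr yL yR IHyl IHyr =>
  refine Iso.mk (Equiv.sumComm _ _) (Equiv.sumComm _ _) ?_ ?_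
  · rintro (i | i)
    · exact IHxl i (mk yl yr yL yR)
    · exact IHyl i
  · rintro (j | j)
    · exact IHxr j (mk yl yr yL yR)
    · exact IHyr j

theorem add_zero_equiv (x : PGame.{u}) : x + 0 ≈ x := (iso_add_zero x).equiv

theorem zero_add_equiv (x : PGame.{u}) : 0 + x ≈ x := (iso_zero_add x).equiv

theorem add_assoc_equiv {x y z : PGame.{u}} : x + y + z ≈ x + (y + z) :=
  (iso_add_assoc x y z).equiv

theorem add_le_add_right' : ∀ {x y z : PGame.{u}}, x ≤ y → x + z ≤ y + z := by
  intro x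
  induction x using wf_subsequent.induction with | _ x IHx => ?_
  intro y
  induction y using wf_subsequent.induction with | _ y IHy => ?_
  intro z
  induction z using wf_subsequent.induction with | _ z IHz => ?_
  intro h
  cases x with | mk xl xr xL xR => ?_
  cases y with | mk yl yr yL yR => ?_
  cases z with | mk zl zr zL zR => ?_
  have h' := le_iff_forall_not.1 h
  refine le_iff_forall_not.2 ⟨?_, ?_⟩
  · rintro (i | i)
    · rcases lf_iff_exists_le.1 (show xL i ⧏ mk yl yr yL yR from h'.1 i) with ⟨i', hi⟩ | ⟨j, hj⟩
      · exact lf_of_le_moveLeft (i := toLeftMovesAdd (Sum.inl i'))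
          (IHx _ (Subsequent.moveLeft (mk xl xr xL xR) i) hi)
      · refine lf_of_moveRight_le (x := xL i + mk zl zr zL zR)
          (j := toRightMovesAdd (Sum.inl j)) ?_
        rw [add_moveRight_inl]
        exact IHx _ (Relation.TransGen.head (IsOption.moveRight j)
          (Subsequent.moveLeft (mk xl xr xL xR) i)) hj
    · exact lf_of_le_moveLeft (i := toLeftMovesAdd (Sum.inr i))
        (IHz _ (Subsequent.moveLeft (mk zl zr zL zR) i) h)
  · rintro (j | j)
    · rcases lf_iff_exists_le.1 (show mk xl xr xL xR ⧏ yR j from h'.2 j) with ⟨i, hi⟩ | ⟨j', hj⟩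
      · refine lf_of_le_moveLeft (y := yR j + mk zl zr zL zR)
          (i := toLeftMovesAdd (Sum.inl i)) ?_
        rw [add_moveLeft_inl]
        exact IHy _ (Relation.TransGen.head (IsOption.moveLeft i)
          (Subsequent.moveRight (mk yl yr yL yR) j)) hi
      · exact lf_of_moveRight_le (j := toRightMovesAdd (Sum.inl j'))
          (IHx _ (Subsequent.moveRight (mk xl xr xL xR) j') hj)
    · exact lf_of_moveRight_le (j := toRightMovesAdd (Sum.inr j))
        (IHz _ (Subsequent.moveRight (mk zl zr zL zR) j) h)

theorem add_congr_left {x₁ x₂ y : PGame.{u}} (h : x₁ ≈ x₂) : x₁ + y ≈ x₂ + y :=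
  ⟨add_le_add_right' h.1, add_le_add_right' h.2⟩

theorem add_congr_right {x y₁ y₂ : PGame.{u}} (h : y₁ ≈ y₂) : x + y₁ ≈ x + y₂ :=
  ((iso_add_comm x y₁).equiv.trans (add_congr_left h)).trans (iso_add_comm y₂ x).equiv

end SetTheory.PGame

/-! ### Auxiliary development for the Blue Flower Ploy -/

namespace BFP

/-- A component of a flower garden: a flower `*n : a` or a nim-heap `*m`. -/
inductive Comp : Type (u + 1)
  | flower (n : ℕ) (a : PGame.{u}) : Comp
  | heap (m : ℕ) : Comp

noncomputable def Comp.toGame : Comp.{u} → PGame.{u}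
  | .flower n a => ordinalSum (nim (n : Ordinal.{u})) a
  | .heap m => nim (m : Ordinal.{u})

/-- Validity of a component. -/
def Comp.Pos : Comp.{u} → Prop
  | .flower n a => 1 ≤ n ∧ a.Numeric
  | .heap _ => True

open Classical in
noncomputable def Comp.blc : Comp.{u} → ℕ
  | .flower _ a => if 0 < a then 1 else 0
  | .heap _ => 0

open Classical in
noncomputable def Comp.rdc : Comp.{u} → ℕ
  | .flower _ a => if a < 0 then 1 else 0
  | .heap _ => 0

open Classical in
noncomputable def Comp.grc : Comp.{u} → ℕ
  | .flower n a => if 0 < a ∨ a < 0 then 0 else n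
  | .heap m => m

noncomputable def bl : List Comp.{u} → ℕ
  | [] => 0
  | c :: t => c.blc + bl t

noncomputable def rd : List Comp.{u} → ℕ
  | [] => 0
  | c :: t => c.rdc + rd t

noncomputable def gr : List Comp.{u} → ℕ
  | [] => 0
  | c :: t => c.grc ^^^ gr t

noncomputable def val : List Comp.{u} → PGame.{u}
  | [] => 0
  | c :: t => c.toGame + val t

def Pos (l : List Comp.{u}) : Prop := ∀ c ∈ l, c.Pos

lemma stats_blue {n : ℕ} {a : PGame.{u}} (h : 0 < a) :
    (Comp.flower n a).blc = 1 ∧ (Comp.flower n a).rdc = 0 ∧ (Comp.flower n a).grc = 0 :=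
  ⟨if_pos h, if_neg h.asymm, if_pos (Or.inl h)⟩

lemma stats_red {n : ℕ} {a : PGame.{u}} (h : a < 0) :
    (Comp.flower n a).blc = 0 ∧ (Comp.flower n a).rdc = 1 ∧ (Comp.flower n a).grc = 0 :=
  ⟨if_neg h.asymm, if_pos h, if_pos (Or.inr h)⟩

lemma stats_green {n : ℕ} {a : PGame.{u}} (h1 : ¬ 0 < a) (h2 : ¬ a < 0) :
    (Comp.flower n a).blc = 0 ∧ (Comp.flower n a).rdc = 0 ∧ (Comp.flower n a).grc = n :=
  ⟨if_neg h1, if_neg h2, if_neg (by tauto)⟩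

lemma stats_heap (m : ℕ) :
    (Comp.heap m : Comp.{u}).blc = 0 ∧ (Comp.heap m : Comp.{u}).rdc = 0 ∧
      (Comp.heap m : Comp.{u}).grc = m := ⟨rfl, rfl, rfl⟩

lemma blc_zero_not_blue {n : ℕ} {a : PGame.{u}} (h : (Comp.flower n a).blc = 0) : ¬ 0 < a :=
  fun hc => by rw [(stats_blue hc).1] at h; exact one_ne_zero h

lemma rdc_zero_not_red {n : ℕ} {a : PGame.{u}} (h : (Comp.flower n a).rdc = 0) : ¬ a < 0 :=
  fun hc => by rw [(stats_red hc).2.1] at h; exact one_ne_zero h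

lemma grc_pos_colors {c : Comp.{u}} (h : 0 < c.grc) : c.blc = 0 ∧ c.rdc = 0 := by
  cases c with
  | heap m => exact ⟨rfl, rfl⟩
  | flower n a =>
    by_cases hc : 0 < a ∨ a < 0
    · have : (Comp.flower n a).grc = 0 := if_pos hc
      rw [this] at h; exact absurd h (lt_irrefl 0)
    · push_neg at hc
      exact ⟨(stats_green hc.1 hc.2).1, (stats_green hc.1 hc.2).2.1⟩

lemma blc_le_one (c : Comp.{u}) : c.blc ≤ 1 := by
  cases c with
  | heap m => exact Nat.zero_le 1
  | flower n a =>
    by_cases h : 0 < a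
    · rw [(stats_blue h).1]
    · have e : (Comp.flower n a).blc = 0 := if_neg h
      omega

lemma rdc_le_one (c : Comp.{u}) : c.rdc ≤ 1 := by
  cases c with
  | heap m => exact Nat.zero_le 1
  | flower n a =>
    by_cases h : a < 0
    · rw [(stats_red h).2.1]
    · have e : (Comp.flower n a).rdc = 0 := if_neg h
      omega

lemma mem_blc_le {c : Comp.{u}} {l : List Comp.{u}} (h : c ∈ l) : c.blc ≤ bl l := by
  induction l with
  | nil => cases h
  | cons x t ih =>
    have e : bl (x :: t) = x.blc + bl t := rfl
    rcases List.mem_cons.1 h with rfl | h'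
    · omega
    · have := ih h'; omega

lemma mem_rdc_le {c : Comp.{u}} {l : List Comp.{u}} (h : c ∈ l) : c.rdc ≤ rd l := by
  induction l with
  | nil => cases h
  | cons x t ih =>
    have e : rd (x :: t) = x.rdc + rd t := rfl
    rcases List.mem_cons.1 h with rfl | h'
    · omega
    · have := ih h'; omega

/-- Numeric facts -/
lemma nonneg_of_not_neg {a : PGame.{u}} (ha : a.Numeric) (h : ¬ a < 0) : 0 ≤ a := by
  by_contra h0
  exact h ((lf_iff_lt ha numeric_zero).1 (PGame.not_le.1 h0))

lemma nonpos_of_not_pos {a : PGame.{u}} (ha : a.Numeric) (h : ¬ 0 < a) : a ≤ 0 := by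
  by_contra h0
  exact h ((lf_iff_lt numeric_zero ha).1 (PGame.not_le.1 h0))

end BFP
namespace BFP

lemma ordinalSum_def (G H : PGame.{u}) : ordinalSum G H =
    PGame.mk (G.LeftMoves ⊕ H.LeftMoves) (G.RightMoves ⊕ H.RightMoves)
      (Sum.elim G.moveLeft fun i => ordinalSum G (H.moveLeft i))
      (Sum.elim G.moveRight fun j => ordinalSum G (H.moveRight j)) := by
  rw [ordinalSum]

lemma moveLeft_of_eq {x : PGame.{u}} {xl xr : Type u} {xL : xl → PGame.{u}}
    {xR : xr → PGame.{u}} (e : x = PGame.mk xl xr xL xR) (i : x.LeftMoves) :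
    ∃ i' : xl, x.moveLeft i = xL i' := by subst e; exact ⟨i, rfl⟩

lemma moveRight_of_eq {x : PGame.{u}} {xl xr : Type u} {xL : xl → PGame.{u}}
    {xR : xr → PGame.{u}} (e : x = PGame.mk xl xr xL xR) (j : x.RightMoves) :
    ∃ j' : xr, x.moveRight j = xR j' := by subst e; exact ⟨j, rfl⟩

lemma exists_moveLeft_of_eq {x : PGame.{u}} {xl xr : Type u} {xL : xl → PGame.{u}}
    {xR : xr → PGame.{u}} (e : x = PGame.mk xl xr xL xR) (i' : xl) :
    ∃ i, x.moveLeft i = xL i' := by subst e; exact ⟨i', rfl⟩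

lemma exists_moveRight_of_eq {x : PGame.{u}} {xl xr : Type u} {xL : xl → PGame.{u}}
    {xR : xr → PGame.{u}} (e : x = PGame.mk xl xr xL xR) (j' : xr) :
    ∃ j, x.moveRight j = xR j' := by subst e; exact ⟨j', rfl⟩

lemma nim_nat_moveLeft {m : ℕ} (i : (nim (m : Ordinal.{u})).LeftMoves) :
    ∃ j : ℕ, j < m ∧ (nim (m : Ordinal.{u})).moveLeft i = nim (j : Ordinal.{u}) := by
  have h := toLeftMovesNim_symm_lt i
  obtain ⟨j, hj⟩ := Ordinal.lt_omega0.1 (h.trans (Ordinal.nat_lt_omega0 m))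
  refine ⟨j, ?_, ?_⟩
  · rw [hj] at h; exact_mod_cast h
  · rw [moveLeft_nim', hj]

lemma nim_nat_moveRight {m : ℕ} (j : (nim (m : Ordinal.{u})).RightMoves) :
    ∃ j' : ℕ, j' < m ∧ (nim (m : Ordinal.{u})).moveRight j = nim (j' : Ordinal.{u}) := by
  have h := toRightMovesNim_symm_lt j
  obtain ⟨j', hj⟩ := Ordinal.lt_omega0.1 (h.trans (Ordinal.nat_lt_omega0 m))
  refine ⟨j', ?_, ?_⟩
  · rw [hj] at h; exact_mod_cast h
  · rw [moveRight_nim', hj]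

lemma nim_nat_exists_moveLeft {m j : ℕ} (h : j < m) :
    ∃ i, (nim (m : Ordinal.{u})).moveLeft i = nim (j : Ordinal.{u}) :=
  ⟨toLeftMovesNim ⟨(j : Ordinal.{u}), Set.mem_Iio.2 (by exact_mod_cast h)⟩, moveLeft_nim _⟩

lemma nim_nat_exists_moveRight {m j : ℕ} (h : j < m) :
    ∃ i, (nim (m : Ordinal.{u})).moveRight i = nim (j : Ordinal.{u}) :=
  ⟨toRightMovesNim ⟨(j : Ordinal.{u}), Set.mem_Iio.2 (by exact_mod_cast h)⟩, moveRight_nim _⟩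

/-- One move in a component; `true` is a Left move, `false` a Right move. -/
inductive CStep : Bool → Comp.{u} → Comp.{u} → Prop
  | nimStep (pl : Bool) {m j : ℕ} (h : j < m) : CStep pl (.heap m) (.heap j)
  | stem (pl : Bool) {n j : ℕ} {a : PGame.{u}} (h : j < n) : CStep pl (.flower n a) (.heap j)
  | bloomL {n : ℕ} {a : PGame.{u}} (i : a.LeftMoves) :
      CStep true (.flower n a) (.flower n (a.moveLeft i))
  | bloomR {n : ℕ} {a : PGame.{u}} (j : a.RightMoves) :
      CStep false (.flower n a) (.flower n (a.moveRight j))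

lemma CStep.pos {pl : Bool} {c c' : Comp.{u}} (h : CStep pl c c') (hc : c.Pos) : c'.Pos := by
  cases h with
  | nimStep => trivial
  | stem => trivial
  | bloomL i => exact ⟨hc.1, hc.2.moveLeft i⟩
  | bloomR j => exact ⟨hc.1, hc.2.moveRight j⟩

lemma cluster_step (pl : Bool) {c : Comp.{u}} {u : ℕ} (h : u < c.grc) :
    CStep pl c (.heap u) := by
  cases c with
  | heap m => exact .nimStep _ h
  | flower n a =>
    have hng : ¬ (0 < a ∨ a < 0) := by
      intro hc
      have e : (Comp.flower n a).grc = 0 := if_pos hc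
      rw [e] at h; exact absurd h (Nat.not_lt_zero u)
    have e : (Comp.flower n a).grc = n := if_neg hng
    rw [e] at h
    exact .stem _ h

lemma comp_analysisL (c : Comp.{u}) (i : c.toGame.LeftMoves) :
    ∃ c', CStep true c c' ∧ c.toGame.moveLeft i = c'.toGame := by
  cases c with
  | heap m =>
    obtain ⟨j, hj, e⟩ := nim_nat_moveLeft i
    exact ⟨.heap j, .nimStep _ hj, e⟩
  | flower n a =>
    obtain ⟨i', e'⟩ := moveLeft_of_eq (ordinalSum_def (nim (n : Ordinal.{u})) a) i
    cases i' with
    | inl i0 =>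
      obtain ⟨j, hj, e0⟩ := nim_nat_moveLeft i0
      exact ⟨.heap j, .stem _ hj, e'.trans e0⟩
    | inr i0 =>
      exact ⟨.flower n (a.moveLeft i0), .bloomL i0, e'⟩

lemma comp_analysisR (c : Comp.{u}) (j : c.toGame.RightMoves) :
    ∃ c', CStep false c c' ∧ c.toGame.moveRight j = c'.toGame := by
  cases c with
  | heap m =>
    obtain ⟨j', hj, e⟩ := nim_nat_moveRight j
    exact ⟨.heap j', .nimStep _ hj, e⟩
  | flower n a =>
    obtain ⟨j', e'⟩ := moveRight_of_eq (ordinalSum_def (nim (n : Ordinal.{u})) a) j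
    cases j' with
    | inl j0 =>
      obtain ⟨j1, hj, e0⟩ := nim_nat_moveRight j0
      exact ⟨.heap j1, .stem _ hj, e'.trans e0⟩
    | inr j0 =>
      exact ⟨.flower n (a.moveRight j0), .bloomR j0, e'⟩

lemma comp_makeL {c c' : Comp.{u}} (h : CStep true c c') :
    ∃ i, c.toGame.moveLeft i = c'.toGame := by
  cases h with
  | nimStep pl hj => exact nim_nat_exists_moveLeft hj
  | stem pl hj =>
    obtain ⟨i0, e0⟩ := nim_nat_exists_moveLeft hj
    obtain ⟨i, e⟩ := exists_moveLeft_of_eq (ordinalSum_def (nim _) _) (Sum.inl i0)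
    exact ⟨i, e.trans e0⟩
  | bloomL i0 =>
    obtain ⟨i, e⟩ := exists_moveLeft_of_eq (ordinalSum_def (nim _) _) (Sum.inr i0)
    exact ⟨i, e⟩

lemma comp_makeR {c c' : Comp.{u}} (h : CStep false c c') :
    ∃ j, c.toGame.moveRight j = c'.toGame := by
  cases h with
  | nimStep pl hj => exact nim_nat_exists_moveRight hj
  | stem pl hj =>
    obtain ⟨j0, e0⟩ := nim_nat_exists_moveRight hj
    obtain ⟨j, e⟩ := exists_moveRight_of_eq (ordinalSum_def (nim _) _) (Sum.inl j0)
    exact ⟨j, e.trans e0⟩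
  | bloomR j0 =>
    obtain ⟨j, e⟩ := exists_moveRight_of_eq (ordinalSum_def (nim _) _) (Sum.inr j0)
    exact ⟨j, e⟩

end BFP
namespace BFP

/-- One move somewhere in a list of components. -/
inductive At (pl : Bool) : List Comp.{u} → List Comp.{u} → Prop
  | head {c c' : Comp.{u}} {t : List Comp.{u}} : CStep pl c c' → At pl (c :: t) (c' :: t)
  | tail {c : Comp.{u}} {t t' : List Comp.{u}} : At pl t t' → At pl (c :: t) (c :: t')

lemma At.stats {pl : Bool} {l l' : List Comp.{u}} (h : At pl l l') (hl : Pos l) :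
    ∃ c c', c ∈ l ∧ CStep pl c c' ∧
      bl l + c'.blc = bl l' + c.blc ∧
      rd l + c'.rdc = rd l' + c.rdc ∧
      gr l' = (gr l ^^^ c.grc) ^^^ c'.grc ∧
      Pos l' ∧ (∀ d ∈ l', d ∈ l ∨ d = c') := by
  induction h with
  | @head c c' t st =>
    refine ⟨c, c', List.mem_cons_self, st, ?_, ?_, ?_, ?_, ?_⟩
    · have e1 : bl (c :: t) = c.blc + bl t := rfl
      have e2 : bl (c' :: t) = c'.blc + bl t := rfl
      omega
    · have e1 : rd (c :: t) = c.rdc + rd t := rfl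
      have e2 : rd (c' :: t) = c'.rdc + rd t := rfl
      omega
    · show c'.grc ^^^ gr t = ((c.grc ^^^ gr t) ^^^ c.grc) ^^^ c'.grc
      rw [Nat.xor_comm c.grc (gr t), Nat.xor_xor_cancel_right, Nat.xor_comm]
    · intro d hd
      rcases List.mem_cons.1 hd with rfl | hd'
      · exact st.pos (hl c (List.mem_cons_self))
      · exact hl d (List.mem_cons_of_mem _ hd')
    · intro d hd
      rcases List.mem_cons.1 hd with rfl | hd'
      · exact Or.inr rfl
      · exact Or.inl (List.mem_cons_of_mem _ hd')
  | @tail x t t' h ih =>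
    obtain ⟨c, c', hm, st, h1, h2, h3, h4, h5⟩ :=
      ih (fun d hd => hl d (List.mem_cons_of_mem _ hd))
    refine ⟨c, c', List.mem_cons_of_mem _ hm, st, ?_, ?_, ?_, ?_, ?_⟩
    · have e1 : bl (x :: t) = x.blc + bl t := rfl
      have e2 : bl (x :: t') = x.blc + bl t' := rfl
      omega
    · have e1 : rd (x :: t) = x.rdc + rd t := rfl
      have e2 : rd (x :: t') = x.rdc + rd t' := rfl
      omega
    · show x.grc ^^^ gr t' = ((x.grc ^^^ gr t) ^^^ c.grc) ^^^ c'.grc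
      rw [h3, ← Nat.xor_assoc, ← Nat.xor_assoc]
    · intro d hd
      rcases List.mem_cons.1 hd with rfl | hd'
      · exact hl d (List.mem_cons_self)
      · exact h4 d hd'
    · intro d hd
      rcases List.mem_cons.1 hd with rfl | hd'
      · exact Or.inl (List.mem_cons_self)
      · rcases h5 d hd' with h | h
        · exact Or.inl (List.mem_cons_of_mem _ h)
        · exact Or.inr h

lemma mem_step {pl : Bool} {c c' : Comp.{u}} {l : List Comp.{u}}
    (hmem : c ∈ l) (st : CStep pl c c') (hl : Pos l) :
    ∃ l', At pl l l' ∧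
      bl l + c'.blc = bl l' + c.blc ∧
      rd l + c'.rdc = rd l' + c.rdc ∧
      gr l' = (gr l ^^^ c.grc) ^^^ c'.grc ∧
      Pos l' ∧ (∀ d ∈ l', d ∈ l ∨ d = c') := by
  induction l with
  | nil => cases hmem
  | cons x t ih =>
    rcases List.mem_cons.1 hmem with rfl | hmem'
    · refine ⟨c' :: t, At.head st, ?_, ?_, ?_, ?_, ?_⟩
      · have e1 : bl (c :: t) = c.blc + bl t := rfl
        have e2 : bl (c' :: t) = c'.blc + bl t := rfl
        omega
      · have e1 : rd (c :: t) = c.rdc + rd t := rfl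
        have e2 : rd (c' :: t) = c'.rdc + rd t := rfl
        omega
      · show c'.grc ^^^ gr t = ((c.grc ^^^ gr t) ^^^ c.grc) ^^^ c'.grc
        rw [Nat.xor_comm c.grc (gr t), Nat.xor_xor_cancel_right, Nat.xor_comm]
      · intro d hd
        rcases List.mem_cons.1 hd with rfl | hd'
        · exact st.pos (hl c hmem)
        · exact hl d (List.mem_cons_of_mem _ hd')
      · intro d hd
        rcases List.mem_cons.1 hd with rfl | hd'
        · exact Or.inr rfl
        · exact Or.inl (List.mem_cons_of_mem _ hd')
    · obtain ⟨t', hat, h1, h2, h3, h4, h5⟩ :=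
        ih hmem' (fun d hd => hl d (List.mem_cons_of_mem _ hd))
      refine ⟨x :: t', At.tail hat, ?_, ?_, ?_, ?_, ?_⟩
      · have e1 : bl (x :: t) = x.blc + bl t := rfl
        have e2 : bl (x :: t') = x.blc + bl t' := rfl
        omega
      · have e1 : rd (x :: t) = x.rdc + rd t := rfl
        have e2 : rd (x :: t') = x.rdc + rd t' := rfl
        omega
      · show x.grc ^^^ gr t' = ((x.grc ^^^ gr t) ^^^ c.grc) ^^^ c'.grc
        rw [h3, ← Nat.xor_assoc, ← Nat.xor_assoc]
      · intro d hd
        rcases List.mem_cons.1 hd with rfl | hd'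
        · exact hl d (List.mem_cons_self)
        · exact h4 d hd'
      · intro d hd
        rcases List.mem_cons.1 hd with rfl | hd'
        · exact Or.inl (List.mem_cons_self)
        · rcases h5 d hd' with h | h
          · exact Or.inl (List.mem_cons_of_mem _ h)
          · exact Or.inr h

lemma val_analysisL : ∀ (l : List Comp.{u}) (i : (val l).LeftMoves),
    ∃ l', At true l l' ∧ (val l).moveLeft i = val l' := by
  intro l
  induction l with
  | nil => exact fun i => isEmptyElim (show (0 : PGame.{u}).LeftMoves from i)
  | cons c t ih =>
    intro i
    obtain ⟨s, rfl⟩ := (@toLeftMovesAdd c.toGame (val t)).surjective i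
    cases s with
    | inl i0 =>
      obtain ⟨c', st, e⟩ := comp_analysisL c i0
      refine ⟨c' :: t, At.head st, ?_⟩
      show (c.toGame + val t).moveLeft (toLeftMovesAdd (Sum.inl i0)) = c'.toGame + val t
      rw [add_moveLeft_inl, e]
    | inr i0 =>
      obtain ⟨t', hat, e⟩ := ih i0
      refine ⟨c :: t', At.tail hat, ?_⟩
      show (c.toGame + val t).moveLeft (toLeftMovesAdd (Sum.inr i0)) = c.toGame + val t'
      rw [add_moveLeft_inr, e]

lemma val_analysisR : ∀ (l : List Comp.{u}) (j : (val l).RightMoves),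
    ∃ l', At false l l' ∧ (val l).moveRight j = val l' := by
  intro l
  induction l with
  | nil => exact fun j => isEmptyElim (show (0 : PGame.{u}).RightMoves from j)
  | cons c t ih =>
    intro j
    obtain ⟨s, rfl⟩ := (@toRightMovesAdd c.toGame (val t)).surjective j
    cases s with
    | inl j0 =>
      obtain ⟨c', st, e⟩ := comp_analysisR c j0
      refine ⟨c' :: t, At.head st, ?_⟩
      show (c.toGame + val t).moveRight (toRightMovesAdd (Sum.inl j0)) = c'.toGame + val t
      rw [add_moveRight_inl, e]
    | inr j0 =>
      obtain ⟨t', hat, e⟩ := ih j0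
      refine ⟨c :: t', At.tail hat, ?_⟩
      show (c.toGame + val t).moveRight (toRightMovesAdd (Sum.inr j0)) = c.toGame + val t'
      rw [add_moveRight_inr, e]

lemma val_makeL {l l' : List Comp.{u}} (h : At true l l') :
    ∃ i, (val l).moveLeft i = val l' := by
  induction h with
  | @head c c' t st =>
    obtain ⟨i, e⟩ := comp_makeL st
    refine ⟨toLeftMovesAdd (Sum.inl i), ?_⟩
    show (c.toGame + val t).moveLeft (toLeftMovesAdd (Sum.inl i)) = c'.toGame + val t
    rw [add_moveLeft_inl, e]
  | @tail c t t' _ ih =>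
    obtain ⟨i, e⟩ := ih
    refine ⟨toLeftMovesAdd (Sum.inr i), ?_⟩
    show (c.toGame + val t).moveLeft (toLeftMovesAdd (Sum.inr i)) = c.toGame + val t'
    rw [add_moveLeft_inr, e]

lemma val_makeR {l l' : List Comp.{u}} (h : At false l l') :
    ∃ j, (val l).moveRight j = val l' := by
  induction h with
  | @head c c' t st =>
    obtain ⟨j, e⟩ := comp_makeR st
    refine ⟨toRightMovesAdd (Sum.inl j), ?_⟩
    show (c.toGame + val t).moveRight (toRightMovesAdd (Sum.inl j)) = c'.toGame + val t
    rw [add_moveRight_inl, e]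
  | @tail c t t' _ ih =>
    obtain ⟨j, e⟩ := ih
    refine ⟨toRightMovesAdd (Sum.inr j), ?_⟩
    show (c.toGame + val t).moveRight (toRightMovesAdd (Sum.inr j)) = c.toGame + val t'
    rw [add_moveRight_inr, e]

end BFP
namespace BFP

lemma gr_bit {l : List Comp.{u}} {i : ℕ} (h : (gr l).testBit i = true) :
    ∃ c ∈ l, c.grc.testBit i = true := by
  induction l with
  | nil => simp [gr, Nat.testBit] at h
  | cons c t ih =>
    have e : gr (c :: t) = c.grc ^^^ gr t := rfl
    rw [e, Nat.testBit_xor] at h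
    by_cases hc : c.grc.testBit i = true
    · exact ⟨c, List.mem_cons_self, hc⟩
    · rw [Bool.not_eq_true] at hc
      rw [hc] at h
      simp at h
      obtain ⟨d, hd, hdi⟩ := ih h
      exact ⟨d, List.mem_cons_of_mem _ hd, hdi⟩

lemma nim_move (l : List Comp.{u}) (u : ℕ) (h : u < gr l) :
    ∃ c ∈ l, ∃ h', h' < c.grc ∧ (gr l ^^^ c.grc) ^^^ h' = u := by
  have hd : u ^^^ gr l ≠ 0 := fun e => absurd (xor_eq_zero_iff.1 e) (ne_of_lt h)
  obtain ⟨i, hdi, hdj⟩ := Nat.exists_most_significant_bit hd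
  have hvi : (gr l).testBit i = true := by
    by_contra hvf
    rw [Bool.not_eq_true] at hvf
    have hui : u.testBit i = true := by
      rw [Nat.testBit_xor, hvf] at hdi
      simpa using hdi
    have hlt : gr l < u := by
      refine Nat.lt_of_testBit i hvf hui fun j hj => ?_
      have hj' := hdj j hj
      rw [Nat.testBit_xor] at hj'
      cases hu : u.testBit j <;> cases hv : (gr l).testBit j <;>
        simp [hu, hv] at hj' ⊢
    exact absurd h (not_lt.2 hlt.le)
  obtain ⟨c, hc, hci⟩ := gr_bit hvi
  refine ⟨c, hc, c.grc ^^^ (u ^^^ gr l), ?_, ?_⟩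
  · refine Nat.lt_of_testBit i ?_ hci fun j hj => ?_
    · rw [Nat.testBit_xor, hci, hdi]
      rfl
    · rw [Nat.testBit_xor, hdj j hj, Bool.xor_false]
  · rw [← Nat.xor_assoc, Nat.xor_xor_cancel_right, Nat.xor_comm u (gr l), Nat.xor_xor_cancel_left]

lemma gr_eq_zero {l : List Comp.{u}} (h : ∀ c ∈ l, c.grc = 0) : gr l = 0 := by
  induction l with
  | nil => rfl
  | cons c t ih =>
    have e : gr (c :: t) = c.grc ^^^ gr t := rfl
    rw [e, h c (List.mem_cons_self), ih fun d hd => h d (List.mem_cons_of_mem _ hd)]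
    simp

lemma exists_red {l : List Comp.{u}} (h : 1 ≤ rd l) : ∃ n a, Comp.flower n a ∈ l ∧ a < 0 := by
  induction l with
  | nil => simp [rd] at h
  | cons c t ih =>
    have e : rd (c :: t) = c.rdc + rd t := rfl
    by_cases hc : 1 ≤ c.rdc
    · cases c with
      | heap m => simp [Comp.rdc] at hc
      | flower n a =>
        refine ⟨n, a, List.mem_cons_self, ?_⟩
        by_contra hna
        have : (Comp.flower n a).rdc = 0 := if_neg hna
        omega
    · obtain ⟨n, a, hm, ha⟩ := ih (by omega)
      exact ⟨n, a, List.mem_cons_of_mem _ hm, ha⟩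

lemma mem_blue_bl {n : ℕ} {a : PGame.{u}} {l : List Comp.{u}}
    (hm : Comp.flower n a ∈ l) (ha : 0 < a) : 1 ≤ bl l := by
  have := mem_blc_le hm
  have e : (Comp.flower n a).blc = 1 := (stats_blue ha).1
  omega

lemma mem_red_rd {n : ℕ} {a : PGame.{u}} {l : List Comp.{u}}
    (hm : Comp.flower n a ∈ l) (ha : a < 0) : 1 ≤ rd l := by
  have := mem_rdc_le hm
  have e : (Comp.flower n a).rdc = 1 := (stats_red ha).2.1
  omega

lemma exists_max_blue {l : List Comp.{u}} (h : 1 ≤ bl l) :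
    ∃ n a, Comp.flower n a ∈ l ∧ 0 < a ∧
      ∀ n' a', Comp.flower n' a' ∈ l → 0 < a' → n' ≤ n := by
  induction l with
  | nil => simp [bl] at h
  | cons c t ih =>
    have e : bl (c :: t) = c.blc + bl t := rfl
    cases c with
    | heap m =>
      have hm : (Comp.heap m : Comp.{u}).blc = 0 := rfl
      obtain ⟨n, a, hmem, ha, hmax⟩ := ih (by omega)
      refine ⟨n, a, List.mem_cons_of_mem _ hmem, ha, fun n' a' hm' ha' => ?_⟩
      rcases List.mem_cons.1 hm' with heq | hm''
      · cases heq
      · exact hmax n' a' hm'' ha'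
    | flower nc ac =>
      by_cases hac : 0 < ac
      · by_cases ht : 1 ≤ bl t
        · obtain ⟨n, a, hmem, ha, hmax⟩ := ih ht
          by_cases hcmp : n ≤ nc
          · refine ⟨nc, ac, List.mem_cons_self, hac, fun n' a' hm' ha' => ?_⟩
            rcases List.mem_cons.1 hm' with heq | hm''
            · injection heq with e1 e2; omega
            · exact le_trans (hmax n' a' hm'' ha') hcmp
          · refine ⟨n, a, List.mem_cons_of_mem _ hmem, ha, fun n' a' hm' ha' => ?_⟩
            rcases List.mem_cons.1 hm' with heq | hm''
            · injection heq with e1 e2; omega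
            · exact hmax n' a' hm'' ha'
        · refine ⟨nc, ac, List.mem_cons_self, hac, fun n' a' hm' ha' => ?_⟩
          rcases List.mem_cons.1 hm' with heq | hm''
          · injection heq with e1 e2; omega
          · exact absurd (mem_blue_bl hm'' ha') ht
      · have hc0 : (Comp.flower nc ac).blc = 0 := if_neg hac
        obtain ⟨n, a, hmem, ha, hmax⟩ := ih (by omega)
        refine ⟨n, a, List.mem_cons_of_mem _ hmem, ha, fun n' a' hm' ha' => ?_⟩
        rcases List.mem_cons.1 hm' with heq | hm''
        · injection heq with e1 e2; subst e1; subst e2; exact absurd ha' hac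
        · exact hmax n' a' hm'' ha'

lemma exists_max_red {l : List Comp.{u}} (h : 1 ≤ rd l) :
    ∃ n a, Comp.flower n a ∈ l ∧ a < 0 ∧
      ∀ n' a', Comp.flower n' a' ∈ l → a' < 0 → n' ≤ n := by
  induction l with
  | nil => simp [rd] at h
  | cons c t ih =>
    have e : rd (c :: t) = c.rdc + rd t := rfl
    cases c with
    | heap m =>
      have hm : (Comp.heap m : Comp.{u}).rdc = 0 := rfl
      obtain ⟨n, a, hmem, ha, hmax⟩ := ih (by omega)
      refine ⟨n, a, List.mem_cons_of_mem _ hmem, ha, fun n' a' hm' ha' => ?_⟩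
      rcases List.mem_cons.1 hm' with heq | hm''
      · cases heq
      · exact hmax n' a' hm'' ha'
    | flower nc ac =>
      by_cases hac : ac < 0
      · by_cases ht : 1 ≤ rd t
        · obtain ⟨n, a, hmem, ha, hmax⟩ := ih ht
          by_cases hcmp : n ≤ nc
          · refine ⟨nc, ac, List.mem_cons_self, hac, fun n' a' hm' ha' => ?_⟩
            rcases List.mem_cons.1 hm' with heq | hm''
            · injection heq with e1 e2; omega
            · exact le_trans (hmax n' a' hm'' ha') hcmp
          · refine ⟨n, a, List.mem_cons_of_mem _ hmem, ha, fun n' a' hm' ha' => ?_⟩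
            rcases List.mem_cons.1 hm' with heq | hm''
            · injection heq with e1 e2; omega
            · exact hmax n' a' hm'' ha'
        · refine ⟨nc, ac, List.mem_cons_self, hac, fun n' a' hm' ha' => ?_⟩
          rcases List.mem_cons.1 hm' with heq | hm''
          · injection heq with e1 e2; omega
          · exact absurd (mem_red_rd hm'' ha') ht
      · have hc0 : (Comp.flower nc ac).rdc = 0 := if_neg hac
        obtain ⟨n, a, hmem, ha, hmax⟩ := ih (by omega)
        refine ⟨n, a, List.mem_cons_of_mem _ hmem, ha, fun n' a' hm' ha' => ?_⟩
        rcases List.mem_cons.1 hm' with heq | hm''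
        · injection heq with e1 e2; subst e1; subst e2; exact absurd ha' hac
        · exact hmax n' a' hm'' ha'

end BFP
namespace BFP

lemma rstep_count {c c' : Comp.{u}} (h : CStep false c c') (hc : c.Pos) :
    c.blc + c'.rdc ≤ c'.blc + c.rdc + 1 := by
  cases h with
  | nimStep pl hj =>
    rename_i m j
    have e1 : (Comp.heap m : Comp.{u}).blc = 0 := rfl
    have e2 : (Comp.heap j : Comp.{u}).rdc = 0 := rfl
    omega
  | stem pl hj =>
    rename_i n j a
    have e1 : (Comp.heap j : Comp.{u}).blc = 0 := rfl
    have e2 : (Comp.heap j : Comp.{u}).rdc = 0 := rfl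
    have e3 := blc_le_one (Comp.flower n a)
    omega
  | bloomR jR =>
    rename_i n a
    have ha : a.Numeric := hc.2
    by_cases h1 : 0 < a
    · have hblue : 0 < a.moveRight jR := lt_trans h1 (ha.lt_moveRight jR)
      have e1 := (stats_blue (n := n) h1).1
      have e2 := (stats_blue (n := n) h1).2.1
      have e3 := (stats_blue (n := n) hblue).1
      have e4 := (stats_blue (n := n) hblue).2.1
      omega
    · by_cases h2 : a < 0
      · have e1 := (stats_red (n := n) h2).1
        have e2 := (stats_red (n := n) h2).2.1
        have e3 := rdc_le_one (Comp.flower n (a.moveRight jR))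
        omega
      · have hblue : 0 < a.moveRight jR :=
          lt_of_le_of_lt (nonneg_of_not_neg ha h2) (ha.lt_moveRight jR)
        have e1 := (stats_green (n := n) h1 h2).1
        have e2 := (stats_green (n := n) h1 h2).2.1
        have e3 := (stats_blue (n := n) hblue).1
        have e4 := (stats_blue (n := n) hblue).2.1
        omega

lemma lstep_count {c c' : Comp.{u}} (h : CStep true c c') (hc : c.Pos) :
    c.rdc + c'.blc ≤ c'.rdc + c.blc + 1 := by
  cases h with
  | nimStep pl hj =>
    rename_i m j
    have e1 : (Comp.heap m : Comp.{u}).rdc = 0 := rfl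
    have e2 : (Comp.heap j : Comp.{u}).blc = 0 := rfl
    omega
  | stem pl hj =>
    rename_i n j a
    have e1 : (Comp.heap j : Comp.{u}).rdc = 0 := rfl
    have e2 : (Comp.heap j : Comp.{u}).blc = 0 := rfl
    have e3 := rdc_le_one (Comp.flower n a)
    omega
  | bloomL iL =>
    rename_i n a
    have ha : a.Numeric := hc.2
    by_cases h1 : a < 0
    · have hred : a.moveLeft iL < 0 := lt_trans (ha.moveLeft_lt iL) h1
      have e1 := (stats_red (n := n) h1).1
      have e2 := (stats_red (n := n) h1).2.1
      have e3 := (stats_red (n := n) hred).1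
      have e4 := (stats_red (n := n) hred).2.1
      omega
    · by_cases h2 : 0 < a
      · have e1 := (stats_blue (n := n) h2).1
        have e2 := (stats_blue (n := n) h2).2.1
        have e3 := blc_le_one (Comp.flower n (a.moveLeft iL))
        omega
      · have hred : a.moveLeft iL < 0 :=
          lt_of_lt_of_le (ha.moveLeft_lt iL) (nonpos_of_not_pos ha h2)
        have e1 := (stats_green (n := n) h2 h1).1
        have e2 := (stats_green (n := n) h2 h1).2.1
        have e3 := (stats_red (n := n) hred).1
        have e4 := (stats_red (n := n) hred).2.1
        omega

/-- The bundle of statements proved by simultaneous induction. -/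
structure Stmts (l : List Comp.{u}) : Prop where
  p1 : rd l + 2 ≤ bl l → 0 ≤ val l
  p2 : rd l + 1 ≤ bl l → 0 ⧏ val l
  p3 : bl l + 2 ≤ rd l → val l ≤ 0
  p4 : bl l + 1 ≤ rd l → val l ⧏ 0
  p5 : bl l = 0 → rd l = 0 → gr l ≠ 0 → 0 ⧏ val l ∧ val l ⧏ 0
  p6 : bl l = 0 → rd l = 0 → gr l = 0 → 0 ≤ val l ∧ val l ≤ 0
  p7 : bl l = 1 → rd l = 0 →
    (∀ n a, Comp.flower n a ∈ l → 0 < a → n ≤ gr l) → 0 ≤ val l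
  p8 : rd l = 1 → bl l = 0 →
    (∀ n a, Comp.flower n a ∈ l → a < 0 → n ≤ gr l) → val l ≤ 0

end BFP
namespace BFP

theorem main (l : List Comp.{u}) (hl : Pos l) : Stmts l := by
  have IH : ∀ l' : List Comp.{u}, Pos l' → Subsequent (val l') (val l) → Stmts l' :=
    fun l' hp _hs => main l' hp
  have P1 : rd l + 2 ≤ bl l → 0 ≤ val l := by
    intro h
    refine zero_le_lf.2 fun j => ?_
    obtain ⟨l', hat, he⟩ := val_analysisR l j
    obtain ⟨c, c', hcm, hst, hb, hr, hg, hpos', hmm⟩ := hat.stats hl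
    have hsub : Subsequent (val l') (val l) := he ▸ Subsequent.moveRight _ j
    have hcnt := rstep_count hst (hl c hcm)
    rw [he]
    exact (IH l' hpos' hsub).p2 (by omega)
  have P3 : bl l + 2 ≤ rd l → val l ≤ 0 := by
    intro h
    refine le_zero_lf.2 fun i => ?_
    obtain ⟨l', hat, he⟩ := val_analysisL l i
    obtain ⟨c, c', hcm, hst, hb, hr, hg, hpos', hmm⟩ := hat.stats hl
    have hsub : Subsequent (val l') (val l) := he ▸ Subsequent.moveLeft _ i
    have hcnt := lstep_count hst (hl c hcm)
    rw [he]
    exact (IH l' hpos' hsub).p4 (by omega)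
  have P2 : rd l + 1 ≤ bl l → 0 ⧏ val l := by
    intro h
    by_cases hr1 : 1 ≤ rd l
    · obtain ⟨n, a, hm, ha⟩ := exists_red hr1
      have hn : (0 : ℕ) < n := (hl _ hm).1
      obtain ⟨l', hat, hb, hrd', hg, hpos', -⟩ :=
        mem_step hm (CStep.stem (a := a) true hn) hl
      obtain ⟨i, he⟩ := val_makeL hat
      have hsub : Subsequent (val l') (val l) := he ▸ Subsequent.moveLeft _ i
      refine zero_lf_le.2 ⟨i, ?_⟩
      rw [he]
      have e1 : (Comp.flower n a).blc = 0 := (stats_red ha).1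
      have e2 : (Comp.flower n a).rdc = 1 := (stats_red ha).2.1
      have e3 : (Comp.heap 0 : Comp.{u}).blc = 0 := rfl
      have e4 : (Comp.heap 0 : Comp.{u}).rdc = 0 := rfl
      exact (IH l' hpos' hsub).p1 (by omega)
    · have hr0 : rd l = 0 := by omega
      have hb1 : 1 ≤ bl l := by omega
      obtain ⟨nb, ab, hbm, hab, hmax⟩ := exists_max_blue hb1
      have hnb : (0 : ℕ) < nb := (hl _ hbm).1
      have hNab : ab.Numeric := (hl _ hbm).2
      have eb1 : (Comp.flower nb ab).blc = 1 := (stats_blue hab).1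
      have eb2 : (Comp.flower nb ab).rdc = 0 := (stats_blue hab).2.1
      have eb3 : (Comp.flower nb ab).grc = 0 := (stats_blue hab).2.2
      by_cases h2 : 2 ≤ bl l
      · by_cases hcl : ∃ c ∈ l, 0 < c.grc
        · obtain ⟨c, hcm, hc1⟩ := hcl
          obtain ⟨l', hat, hb, hrd', hg, hpos', -⟩ :=
            mem_step hcm (cluster_step (u := 0) true hc1) hl
          obtain ⟨i, he⟩ := val_makeL hat
          have hsub : Subsequent (val l') (val l) := he ▸ Subsequent.moveLeft _ i
          refine zero_lf_le.2 ⟨i, ?_⟩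
          rw [he]
          obtain ⟨e1, e2⟩ := grc_pos_colors hc1
          have e3 : (Comp.heap 0 : Comp.{u}).blc = 0 := rfl
          have e4 : (Comp.heap 0 : Comp.{u}).rdc = 0 := rfl
          exact (IH l' hpos' hsub).p1 (by omega)
        · push_neg at hcl
          have hg0 : gr l = 0 := gr_eq_zero fun c hc => by have := hcl c hc; omega
          obtain ⟨iL, hiL⟩ := zero_lf_le.1 (lf_of_lt hab)
          obtain ⟨l', hat, hb, hrd', hg, hpos', hmm⟩ :=
            mem_step hbm (CStep.bloomL (n := nb) iL) hl
          obtain ⟨i, he⟩ := val_makeL hat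
          have hsub : Subsequent (val l') (val l) := he ▸ Subsequent.moveLeft _ i
          refine zero_lf_le.2 ⟨i, ?_⟩
          rw [he]
          have hnotred : ¬ ab.moveLeft iL < 0 :=
            fun hcon => absurd (lt_of_le_of_lt hiL hcon) (lt_irrefl 0)
          have er' : (Comp.flower nb (ab.moveLeft iL)).rdc = 0 := if_neg hnotred
          by_cases hbL : 0 < ab.moveLeft iL
          · have eb' : (Comp.flower nb (ab.moveLeft iL)).blc = 1 := if_pos hbL
            exact (IH l' hpos' hsub).p1 (by omega)
          · have eb' : (Comp.flower nb (ab.moveLeft iL)).blc = 0 := if_neg hbL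
            have eg' : (Comp.flower nb (ab.moveLeft iL)).grc = nb :=
              (stats_green hbL hnotred).2.2
            by_cases h3 : 3 ≤ bl l
            · exact (IH l' hpos' hsub).p1 (by omega)
            · refine (IH l' hpos' hsub).p7 (by omega) (by omega) ?_
              intro n' a' hm' ha'
              have hgl' : gr l' = nb := by
                rw [hg, hg0, eb3, eg']
                simp
              rw [hgl']
              rcases hmm _ hm' with hin | heq
              · exact hmax n' a' hin ha'
              · injection heq with eqn eqa
                exact absurd (eqa ▸ ha') hbL
      · have hb1' : bl l = 1 := by omega
        rcases lt_trichotomy (gr l) nb with hlt | heqg | hgt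
        · obtain ⟨l', hat, hb, hrd', hg, hpos', -⟩ :=
            mem_step hbm (CStep.stem (a := ab) true hlt) hl
          obtain ⟨i, he⟩ := val_makeL hat
          have hsub : Subsequent (val l') (val l) := he ▸ Subsequent.moveLeft _ i
          refine zero_lf_le.2 ⟨i, ?_⟩
          rw [he]
          have e3 : (Comp.heap (gr l) : Comp.{u}).blc = 0 := rfl
          have e4 : (Comp.heap (gr l) : Comp.{u}).rdc = 0 := rfl
          have e5 : (Comp.heap (gr l) : Comp.{u}).grc = gr l := rfl
          have hg0' : gr l' = 0 := by
            rw [hg, eb3, e5, Nat.xor_zero, Nat.xor_self]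
          exact ((IH l' hpos' hsub).p6 (by omega) (by omega) hg0').1
        · obtain ⟨iL, hiL⟩ := zero_lf_le.1 (lf_of_lt hab)
          obtain ⟨l', hat, hb, hrd', hg, hpos', hmm⟩ :=
            mem_step hbm (CStep.bloomL (n := nb) iL) hl
          obtain ⟨i, he⟩ := val_makeL hat
          have hsub : Subsequent (val l') (val l) := he ▸ Subsequent.moveLeft _ i
          refine zero_lf_le.2 ⟨i, ?_⟩
          rw [he]
          have hnotred : ¬ ab.moveLeft iL < 0 :=
            fun hcon => absurd (lt_of_le_of_lt hiL hcon) (lt_irrefl 0)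
          have er' : (Comp.flower nb (ab.moveLeft iL)).rdc = 0 := if_neg hnotred
          by_cases hbL : 0 < ab.moveLeft iL
          · have eb' : (Comp.flower nb (ab.moveLeft iL)).blc = 1 := if_pos hbL
            have eg' : (Comp.flower nb (ab.moveLeft iL)).grc = 0 := (stats_blue hbL).2.2
            refine (IH l' hpos' hsub).p7 (by omega) (by omega) ?_
            intro n' a' hm' ha'
            have hgl' : gr l' = gr l := by
              rw [hg, eb3, eg', Nat.xor_zero, Nat.xor_zero]
            rw [hgl']
            rcases hmm _ hm' with hin | heq
            · exact le_trans (hmax n' a' hin ha') (le_of_eq heqg.symm)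
            · injection heq with eqn eqa
              subst eqn
              exact le_of_eq heqg.symm
          · have eb' : (Comp.flower nb (ab.moveLeft iL)).blc = 0 := if_neg hbL
            have eg' : (Comp.flower nb (ab.moveLeft iL)).grc = nb :=
              (stats_green hbL hnotred).2.2
            have hg0' : gr l' = 0 := by
              rw [hg, eb3, eg', Nat.xor_zero, heqg, Nat.xor_self]
            exact ((IH l' hpos' hsub).p6 (by omega) (by omega) hg0').1
        · obtain ⟨c, hcm, h', hlt', hx⟩ := nim_move l nb hgt
          obtain ⟨l', hat, hb, hrd', hg, hpos', hmm⟩ :=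
            mem_step hcm (cluster_step true hlt') hl
          obtain ⟨i, he⟩ := val_makeL hat
          have hsub : Subsequent (val l') (val l) := he ▸ Subsequent.moveLeft _ i
          refine zero_lf_le.2 ⟨i, ?_⟩
          rw [he]
          obtain ⟨e1, e2⟩ := grc_pos_colors (lt_of_le_of_lt (Nat.zero_le h') hlt')
          have e3 : (Comp.heap h' : Comp.{u}).blc = 0 := rfl
          have e4 : (Comp.heap h' : Comp.{u}).rdc = 0 := rfl
          have e5 : (Comp.heap h' : Comp.{u}).grc = h' := rfl
          have hgl' : gr l' = nb := by rw [hg, e5]; exact hx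
          refine (IH l' hpos' hsub).p7 (by omega) (by omega) ?_
          intro n' a' hm' ha'
          rw [hgl']
          rcases hmm _ hm' with hin | heq
          · exact hmax n' a' hin ha'
          · simp at heq
  have P4 : bl l + 1 ≤ rd l → val l ⧏ 0 := by
    intro h
    by_cases hb1 : 1 ≤ bl l
    · obtain ⟨n, a, hm, ha⟩ := exists_max_blue hb1
      have hn : (0 : ℕ) < n := (hl _ hm).1
      obtain ⟨l', hat, hb, hrd', hg, hpos', -⟩ :=
        mem_step hm (CStep.stem (a := a) false hn) hl
      obtain ⟨j, he⟩ := val_makeR hat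
      have hsub : Subsequent (val l') (val l) := he ▸ Subsequent.moveRight _ j
      refine lf_zero_le.2 ⟨j, ?_⟩
      rw [he]
      have e1 : (Comp.flower n a).blc = 1 := (stats_blue ha.1).1
      have e2 : (Comp.flower n a).rdc = 0 := (stats_blue ha.1).2.1
      have e3 : (Comp.heap 0 : Comp.{u}).blc = 0 := rfl
      have e4 : (Comp.heap 0 : Comp.{u}).rdc = 0 := rfl
      exact (IH l' hpos' hsub).p3 (by omega)
    · have hb0 : bl l = 0 := by omega
      have hr1 : 1 ≤ rd l := by omega
      obtain ⟨nb, ab, hbm, hab, hmax⟩ := exists_max_red hr1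
      have hnb : (0 : ℕ) < nb := (hl _ hbm).1
      have hNab : ab.Numeric := (hl _ hbm).2
      have eb1 : (Comp.flower nb ab).blc = 0 := (stats_red hab).1
      have eb2 : (Comp.flower nb ab).rdc = 1 := (stats_red hab).2.1
      have eb3 : (Comp.flower nb ab).grc = 0 := (stats_red hab).2.2
      by_cases h2 : 2 ≤ rd l
      · by_cases hcl : ∃ c ∈ l, 0 < c.grc
        · obtain ⟨c, hcm, hc1⟩ := hcl
          obtain ⟨l', hat, hb, hrd', hg, hpos', -⟩ :=
            mem_step hcm (cluster_step (u := 0) false hc1) hl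
          obtain ⟨j, he⟩ := val_makeR hat
          have hsub : Subsequent (val l') (val l) := he ▸ Subsequent.moveRight _ j
          refine lf_zero_le.2 ⟨j, ?_⟩
          rw [he]
          obtain ⟨e1, e2⟩ := grc_pos_colors hc1
          have e3 : (Comp.heap 0 : Comp.{u}).blc = 0 := rfl
          have e4 : (Comp.heap 0 : Comp.{u}).rdc = 0 := rfl
          exact (IH l' hpos' hsub).p3 (by omega)
        · push_neg at hcl
          have hg0 : gr l = 0 := gr_eq_zero fun c hc => by have := hcl c hc; omega
          obtain ⟨jR, hjR⟩ := lf_zero_le.1 (lf_of_lt hab)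
          obtain ⟨l', hat, hb, hrd', hg, hpos', hmm⟩ :=
            mem_step hbm (CStep.bloomR (n := nb) jR) hl
          obtain ⟨j, he⟩ := val_makeR hat
          have hsub : Subsequent (val l') (val l) := he ▸ Subsequent.moveRight _ j
          refine lf_zero_le.2 ⟨j, ?_⟩
          rw [he]
          have hnotblue : ¬ 0 < ab.moveRight jR :=
            fun hcon => absurd (lt_of_lt_of_le hcon hjR) (lt_irrefl 0)
          have eb' : (Comp.flower nb (ab.moveRight jR)).blc = 0 := if_neg hnotblue
          by_cases hrR : ab.moveRight jR < 0
          · have er' : (Comp.flower nb (ab.moveRight jR)).rdc = 1 := if_pos hrR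
            exact (IH l' hpos' hsub).p3 (by omega)
          · have er' : (Comp.flower nb (ab.moveRight jR)).rdc = 0 := if_neg hrR
            have eg' : (Comp.flower nb (ab.moveRight jR)).grc = nb :=
              (stats_green hnotblue hrR).2.2
            by_cases h3 : 3 ≤ rd l
            · exact (IH l' hpos' hsub).p3 (by omega)
            · refine (IH l' hpos' hsub).p8 (by omega) (by omega) ?_
              intro n' a' hm' ha'
              have hgl' : gr l' = nb := by
                rw [hg, hg0, eb3, eg']
                simp
              rw [hgl']
              rcases hmm _ hm' with hin | heq
              · exact hmax n' a' hin ha'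
              · injection heq with eqn eqa
                exact absurd (eqa ▸ ha') hrR
      · have hr1' : rd l = 1 := by omega
        rcases lt_trichotomy (gr l) nb with hlt | heqg | hgt
        · obtain ⟨l', hat, hb, hrd', hg, hpos', -⟩ :=
            mem_step hbm (CStep.stem (a := ab) false hlt) hl
          obtain ⟨j, he⟩ := val_makeR hat
          have hsub : Subsequent (val l') (val l) := he ▸ Subsequent.moveRight _ j
          refine lf_zero_le.2 ⟨j, ?_⟩
          rw [he]
          have e3 : (Comp.heap (gr l) : Comp.{u}).blc = 0 := rfl
          have e4 : (Comp.heap (gr l) : Comp.{u}).rdc = 0 := rfl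
          have e5 : (Comp.heap (gr l) : Comp.{u}).grc = gr l := rfl
          have hg0' : gr l' = 0 := by
            rw [hg, eb3, e5, Nat.xor_zero, Nat.xor_self]
          exact ((IH l' hpos' hsub).p6 (by omega) (by omega) hg0').2
        · obtain ⟨jR, hjR⟩ := lf_zero_le.1 (lf_of_lt hab)
          obtain ⟨l', hat, hb, hrd', hg, hpos', hmm⟩ :=
            mem_step hbm (CStep.bloomR (n := nb) jR) hl
          obtain ⟨j, he⟩ := val_makeR hat
          have hsub : Subsequent (val l') (val l) := he ▸ Subsequent.moveRight _ j
          refine lf_zero_le.2 ⟨j, ?_⟩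
          rw [he]
          have hnotblue : ¬ 0 < ab.moveRight jR :=
            fun hcon => absurd (lt_of_lt_of_le hcon hjR) (lt_irrefl 0)
          have eb' : (Comp.flower nb (ab.moveRight jR)).blc = 0 := if_neg hnotblue
          by_cases hrR : ab.moveRight jR < 0
          · have er' : (Comp.flower nb (ab.moveRight jR)).rdc = 1 := if_pos hrR
            have eg' : (Comp.flower nb (ab.moveRight jR)).grc = 0 := (stats_red hrR).2.2
            refine (IH l' hpos' hsub).p8 (by omega) (by omega) ?_
            intro n' a' hm' ha'
            have hgl' : gr l' = gr l := by
              rw [hg, eb3, eg', Nat.xor_zero, Nat.xor_zero]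
            rw [hgl']
            rcases hmm _ hm' with hin | heq
            · exact le_trans (hmax n' a' hin ha') (le_of_eq heqg.symm)
            · injection heq with eqn eqa
              subst eqn
              exact le_of_eq heqg.symm
          · have er' : (Comp.flower nb (ab.moveRight jR)).rdc = 0 := if_neg hrR
            have eg' : (Comp.flower nb (ab.moveRight jR)).grc = nb :=
              (stats_green hnotblue hrR).2.2
            have hg0' : gr l' = 0 := by
              rw [hg, eb3, eg', Nat.xor_zero, heqg, Nat.xor_self]
            exact ((IH l' hpos' hsub).p6 (by omega) (by omega) hg0').2
        · obtain ⟨c, hcm, h', hlt', hx⟩ := nim_move l nb hgt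
          obtain ⟨l', hat, hb, hrd', hg, hpos', hmm⟩ :=
            mem_step hcm (cluster_step false hlt') hl
          obtain ⟨j, he⟩ := val_makeR hat
          have hsub : Subsequent (val l') (val l) := he ▸ Subsequent.moveRight _ j
          refine lf_zero_le.2 ⟨j, ?_⟩
          rw [he]
          obtain ⟨e1, e2⟩ := grc_pos_colors (lt_of_le_of_lt (Nat.zero_le h') hlt')
          have e3 : (Comp.heap h' : Comp.{u}).blc = 0 := rfl
          have e4 : (Comp.heap h' : Comp.{u}).rdc = 0 := rfl
          have e5 : (Comp.heap h' : Comp.{u}).grc = h' := rfl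
          have hgl' : gr l' = nb := by rw [hg, e5]; exact hx
          refine (IH l' hpos' hsub).p8 (by omega) (by omega) ?_
          intro n' a' hm' ha'
          rw [hgl']
          rcases hmm _ hm' with hin | heq
          · exact hmax n' a' hin ha'
          · simp at heq
  have P5 : bl l = 0 → rd l = 0 → gr l ≠ 0 → 0 ⧏ val l ∧ val l ⧏ 0 := by
    intro hb0 hr0 hgne
    obtain ⟨c, hcm, h', hlt', hx⟩ := nim_move l 0 (Nat.pos_of_ne_zero hgne)
    obtain ⟨e1, e2⟩ := grc_pos_colors (lt_of_le_of_lt (Nat.zero_le h') hlt')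
    have e3 : (Comp.heap h' : Comp.{u}).blc = 0 := rfl
    have e4 : (Comp.heap h' : Comp.{u}).rdc = 0 := rfl
    have e5 : (Comp.heap h' : Comp.{u}).grc = h' := rfl
    constructor
    · obtain ⟨l', hat, hb, hrd', hg, hpos', -⟩ :=
        mem_step hcm (cluster_step true hlt') hl
      obtain ⟨i, he⟩ := val_makeL hat
      have hsub : Subsequent (val l') (val l) := he ▸ Subsequent.moveLeft _ i
      refine zero_lf_le.2 ⟨i, ?_⟩
      rw [he]
      have hgl' : gr l' = 0 := by rw [hg, e5]; exact hx
      exact ((IH l' hpos' hsub).p6 (by omega) (by omega) hgl').1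
    · obtain ⟨l', hat, hb, hrd', hg, hpos', -⟩ :=
        mem_step hcm (cluster_step false hlt') hl
      obtain ⟨j, he⟩ := val_makeR hat
      have hsub : Subsequent (val l') (val l) := he ▸ Subsequent.moveRight _ j
      refine lf_zero_le.2 ⟨j, ?_⟩
      rw [he]
      have hgl' : gr l' = 0 := by rw [hg, e5]; exact hx
      exact ((IH l' hpos' hsub).p6 (by omega) (by omega) hgl').2
  have P6 : bl l = 0 → rd l = 0 → gr l = 0 → 0 ≤ val l ∧ val l ≤ 0 := by
    intro hb0 hr0 hg0
    constructor
    · refine zero_le_lf.2 fun j => ?_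
      obtain ⟨l', hat, he⟩ := val_analysisR l j
      obtain ⟨c, c', hcm, hst, hb, hr, hg, hpos', hmm⟩ := hat.stats hl
      have hsub : Subsequent (val l') (val l) := he ▸ Subsequent.moveRight _ j
      rw [he]
      have hcb : c.blc = 0 := by have := mem_blc_le hcm; omega
      have hcr : c.rdc = 0 := by have := mem_rdc_le hcm; omega
      have M := IH l' hpos' hsub
      cases hst with
      | nimStep pl hj =>
        rename_i m j'
        have f1 : (Comp.heap m : Comp.{u}).blc = 0 := rfl
        have f2 : (Comp.heap m : Comp.{u}).rdc = 0 := rfl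
        have f3 : (Comp.heap m : Comp.{u}).grc = m := rfl
        have f4 : (Comp.heap j' : Comp.{u}).blc = 0 := rfl
        have f5 : (Comp.heap j' : Comp.{u}).rdc = 0 := rfl
        have f6 : (Comp.heap j' : Comp.{u}).grc = j' := rfl
        have hgl' : gr l' ≠ 0 := by
          rw [hg, f3, f6, hg0, Nat.zero_xor]
          exact fun e => by have := xor_eq_zero_iff.1 e; omega
        exact (M.p5 (by omega) (by omega) hgl').1
      | stem pl hj =>
        rename_i n j' a
        have hnb : ¬ 0 < a := blc_zero_not_blue hcb
        have hnr : ¬ a < 0 := rdc_zero_not_red hcr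
        have f3 : (Comp.flower n a).grc = n := (stats_green hnb hnr).2.2
        have f4 : (Comp.heap j' : Comp.{u}).blc = 0 := rfl
        have f5 : (Comp.heap j' : Comp.{u}).rdc = 0 := rfl
        have f6 : (Comp.heap j' : Comp.{u}).grc = j' := rfl
        have hgl' : gr l' ≠ 0 := by
          rw [hg, f3, f6, hg0, Nat.zero_xor]
          exact fun e => by have := xor_eq_zero_iff.1 e; omega
        exact (M.p5 (by omega) (by omega) hgl').1
      | bloomR jR =>
        rename_i n a
        have hnb : ¬ 0 < a := blc_zero_not_blue hcb
        have hnr : ¬ a < 0 := rdc_zero_not_red hcr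
        have hNa : a.Numeric := (hl _ hcm).2
        have hblue : 0 < a.moveRight jR :=
          lt_of_le_of_lt (nonneg_of_not_neg hNa hnr) (hNa.lt_moveRight jR)
        have f1 : (Comp.flower n (a.moveRight jR)).blc = 1 := (stats_blue hblue).1
        have f2 : (Comp.flower n (a.moveRight jR)).rdc = 0 := (stats_blue hblue).2.1
        exact M.p2 (by omega)
    · refine le_zero_lf.2 fun i => ?_
      obtain ⟨l', hat, he⟩ := val_analysisL l i
      obtain ⟨c, c', hcm, hst, hb, hr, hg, hpos', hmm⟩ := hat.stats hl
      have hsub : Subsequent (val l') (val l) := he ▸ Subsequent.moveLeft _ i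
      rw [he]
      have hcb : c.blc = 0 := by have := mem_blc_le hcm; omega
      have hcr : c.rdc = 0 := by have := mem_rdc_le hcm; omega
      have M := IH l' hpos' hsub
      cases hst with
      | nimStep pl hj =>
        rename_i m j'
        have f1 : (Comp.heap m : Comp.{u}).blc = 0 := rfl
        have f2 : (Comp.heap m : Comp.{u}).rdc = 0 := rfl
        have f3 : (Comp.heap m : Comp.{u}).grc = m := rfl
        have f4 : (Comp.heap j' : Comp.{u}).blc = 0 := rfl
        have f5 : (Comp.heap j' : Comp.{u}).rdc = 0 := rfl
        have f6 : (Comp.heap j' : Comp.{u}).grc = j' := rfl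
        have hgl' : gr l' ≠ 0 := by
          rw [hg, f3, f6, hg0, Nat.zero_xor]
          exact fun e => by have := xor_eq_zero_iff.1 e; omega
        exact (M.p5 (by omega) (by omega) hgl').2
      | stem pl hj =>
        rename_i n j' a
        have hnb : ¬ 0 < a := blc_zero_not_blue hcb
        have hnr : ¬ a < 0 := rdc_zero_not_red hcr
        have f3 : (Comp.flower n a).grc = n := (stats_green hnb hnr).2.2
        have f4 : (Comp.heap j' : Comp.{u}).blc = 0 := rfl
        have f5 : (Comp.heap j' : Comp.{u}).rdc = 0 := rfl
        have f6 : (Comp.heap j' : Comp.{u}).grc = j' := rfl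
        have hgl' : gr l' ≠ 0 := by
          rw [hg, f3, f6, hg0, Nat.zero_xor]
          exact fun e => by have := xor_eq_zero_iff.1 e; omega
        exact (M.p5 (by omega) (by omega) hgl').2
      | bloomL iL =>
        rename_i n a
        have hnb : ¬ 0 < a := blc_zero_not_blue hcb
        have hnr : ¬ a < 0 := rdc_zero_not_red hcr
        have hNa : a.Numeric := (hl _ hcm).2
        have hred : a.moveLeft iL < 0 :=
          lt_of_lt_of_le (hNa.moveLeft_lt iL) (nonpos_of_not_pos hNa hnb)
        have f1 : (Comp.flower n (a.moveLeft iL)).blc = 0 := (stats_red hred).1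
        have f2 : (Comp.flower n (a.moveLeft iL)).rdc = 1 := (stats_red hred).2.1
        exact M.p4 (by omega)
  have P7 : bl l = 1 → rd l = 0 →
      (∀ n a, Comp.flower n a ∈ l → 0 < a → n ≤ gr l) → 0 ≤ val l := by
    intro hb1 hr0 hmax
    refine zero_le_lf.2 fun j => ?_
    obtain ⟨l', hat, he⟩ := val_analysisR l j
    obtain ⟨c, c', hcm, hst, hb, hr, hg, hpos', hmm⟩ := hat.stats hl
    have hsub : Subsequent (val l') (val l) := he ▸ Subsequent.moveRight _ j
    rw [he]
    have hcr : c.rdc = 0 := by have := mem_rdc_le hcm; omega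
    have M := IH l' hpos' hsub
    cases hst with
    | nimStep pl hj =>
      rename_i m j'
      have f1 : (Comp.heap m : Comp.{u}).blc = 0 := rfl
      have f2 : (Comp.heap m : Comp.{u}).rdc = 0 := rfl
      have f4 : (Comp.heap j' : Comp.{u}).blc = 0 := rfl
      have f5 : (Comp.heap j' : Comp.{u}).rdc = 0 := rfl
      exact M.p2 (by omega)
    | stem pl hj =>
      rename_i n j' a
      have f4 : (Comp.heap j' : Comp.{u}).blc = 0 := rfl
      have f5 : (Comp.heap j' : Comp.{u}).rdc = 0 := rfl
      have f6 : (Comp.heap j' : Comp.{u}).grc = j' := rfl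
      by_cases hba : 0 < a
      · have hnle : n ≤ gr l := hmax n a hcm hba
        have f1 : (Comp.flower n a).blc = 1 := (stats_blue hba).1
        have f3 : (Comp.flower n a).grc = 0 := (stats_blue hba).2.2
        have hgl' : gr l' ≠ 0 := by
          rw [hg, f3, f6, Nat.xor_zero]
          exact fun e => by have := xor_eq_zero_iff.1 e; omega
        exact (M.p5 (by omega) (by omega) hgl').1
      · have f1 : (Comp.flower n a).blc = 0 := if_neg hba
        exact M.p2 (by omega)
    | bloomR jR =>
      rename_i n a
      have hNa : a.Numeric := (hl _ hcm).2
      have hnr : ¬ a < 0 := rdc_zero_not_red hcr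
      by_cases hba : 0 < a
      · have hblue : 0 < a.moveRight jR := lt_trans hba (hNa.lt_moveRight jR)
        have f1 : (Comp.flower n a).blc = 1 := (stats_blue hba).1
        have g1 : (Comp.flower n (a.moveRight jR)).blc = 1 := (stats_blue hblue).1
        have g2 : (Comp.flower n (a.moveRight jR)).rdc = 0 := (stats_blue hblue).2.1
        exact M.p2 (by omega)
      · have hblue : 0 < a.moveRight jR :=
          lt_of_le_of_lt (nonneg_of_not_neg hNa hnr) (hNa.lt_moveRight jR)
        have f1 : (Comp.flower n a).blc = 0 := if_neg hba
        have g1 : (Comp.flower n (a.moveRight jR)).blc = 1 := (stats_blue hblue).1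
        have g2 : (Comp.flower n (a.moveRight jR)).rdc = 0 := (stats_blue hblue).2.1
        exact M.p2 (by omega)
  have P8 : rd l = 1 → bl l = 0 →
      (∀ n a, Comp.flower n a ∈ l → a < 0 → n ≤ gr l) → val l ≤ 0 := by
    intro hr1 hb0 hmax
    refine le_zero_lf.2 fun i => ?_
    obtain ⟨l', hat, he⟩ := val_analysisL l i
    obtain ⟨c, c', hcm, hst, hb, hr, hg, hpos', hmm⟩ := hat.stats hl
    have hsub : Subsequent (val l') (val l) := he ▸ Subsequent.moveLeft _ i
    rw [he]
    have hcb : c.blc = 0 := by have := mem_blc_le hcm; omega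
    have M := IH l' hpos' hsub
    cases hst with
    | nimStep pl hj =>
      rename_i m j'
      have f1 : (Comp.heap m : Comp.{u}).blc = 0 := rfl
      have f2 : (Comp.heap m : Comp.{u}).rdc = 0 := rfl
      have f4 : (Comp.heap j' : Comp.{u}).blc = 0 := rfl
      have f5 : (Comp.heap j' : Comp.{u}).rdc = 0 := rfl
      exact M.p4 (by omega)
    | stem pl hj =>
      rename_i n j' a
      have f4 : (Comp.heap j' : Comp.{u}).blc = 0 := rfl
      have f5 : (Comp.heap j' : Comp.{u}).rdc = 0 := rfl
      have f6 : (Comp.heap j' : Comp.{u}).grc = j' := rfl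
      by_cases hra : a < 0
      · have hnle : n ≤ gr l := hmax n a hcm hra
        have f1 : (Comp.flower n a).rdc = 1 := (stats_red hra).2.1
        have f3 : (Comp.flower n a).grc = 0 := (stats_red hra).2.2
        have hgl' : gr l' ≠ 0 := by
          rw [hg, f3, f6, Nat.xor_zero]
          exact fun e => by have := xor_eq_zero_iff.1 e; omega
        exact (M.p5 (by omega) (by omega) hgl').2
      · have f1 : (Comp.flower n a).rdc = 0 := if_neg hra
        exact M.p4 (by omega)
    | bloomL iL =>
      rename_i n a
      have hNa : a.Numeric := (hl _ hcm).2
      have hnb : ¬ 0 < a := blc_zero_not_blue hcb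
      by_cases hra : a < 0
      · have hred : a.moveLeft iL < 0 := lt_trans (hNa.moveLeft_lt iL) hra
        have f1 : (Comp.flower n a).rdc = 1 := (stats_red hra).2.1
        have g1 : (Comp.flower n (a.moveLeft iL)).rdc = 1 := (stats_red hred).2.1
        have g2 : (Comp.flower n (a.moveLeft iL)).blc = 0 := (stats_red hred).1
        exact M.p4 (by omega)
      · have hred : a.moveLeft iL < 0 :=
          lt_of_lt_of_le (hNa.moveLeft_lt iL) (nonpos_of_not_pos hNa hnb)
        have f1 : (Comp.flower n a).rdc = 0 := if_neg hra
        have g1 : (Comp.flower n (a.moveLeft iL)).rdc = 1 := (stats_red hred).2.1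
        have g2 : (Comp.flower n (a.moveLeft iL)).blc = 0 := (stats_red hred).1
        exact M.p4 (by omega)
  exact ⟨P1, P2, P3, P4, P5, P6, P7, P8⟩
termination_by val l
decreasing_by exact _hs

end BFP
namespace BFP

lemma val_append_single (l : List Comp.{u}) (c : Comp.{u}) :
    val (l ++ [c]) ≈ val l + c.toGame := by
  induction l with
  | nil =>
    show c.toGame + (0 : PGame.{u}) ≈ (0 : PGame.{u}) + c.toGame
    exact PGame.Equiv.trans (add_zero_equiv _) (PGame.Equiv.symm (zero_add_equiv _))
  | cons x t ih =>
    show x.toGame + val (t ++ [c]) ≈ (x.toGame + val t) + c.toGame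
    exact PGame.Equiv.trans (add_congr_right ih) (PGame.Equiv.symm add_assoc_equiv)

lemma psum_equiv_val : ∀ {k : ℕ} (g : Fin k → Comp.{u}),
    psum (fun i => (g i).toGame) ≈ val (List.ofFn g) := by
  intro k
  induction k with
  | zero => intro g; exact PGame.equiv_rfl
  | succ k ih =>
    intro g
    have e1 : psum (fun i => (g i).toGame) =
        psum (fun i : Fin k => (g i.castSucc).toGame) + (g (Fin.last k)).toGame := rfl
    have e2 : List.ofFn g = (List.ofFn fun i : Fin k => g i.castSucc) ++ [g (Fin.last k)] := by
      rw [List.ofFn_succ']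
      simp [List.concat_eq_append]
    rw [e1, e2]
    exact PGame.Equiv.trans (add_congr_left (ih _)) (PGame.Equiv.symm (val_append_single _ _))

lemma bl_ofFn {k : ℕ} (g : Fin k → Comp.{u}) :
    bl (List.ofFn g) = ∑ i, (g i).blc := by
  induction k with
  | zero => simp [bl]
  | succ k ih =>
    rw [List.ofFn_succ]
    have e : bl (g 0 :: List.ofFn fun i : Fin k => g i.succ) =
        (g 0).blc + bl (List.ofFn fun i : Fin k => g i.succ) := rfl
    rw [e, ih, Fin.sum_univ_succ]

lemma rd_ofFn {k : ℕ} (g : Fin k → Comp.{u}) :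
    rd (List.ofFn g) = ∑ i, (g i).rdc := by
  induction k with
  | zero => simp [rd]
  | succ k ih =>
    rw [List.ofFn_succ]
    have e : rd (g 0 :: List.ofFn fun i : Fin k => g i.succ) =
        (g 0).rdc + rd (List.ofFn fun i : Fin k => g i.succ) := rfl
    rw [e, ih, Fin.sum_univ_succ]

end BFP
/-- Blue Flower Ploy: for a sum `G` of flowers `*nᵢ : aᵢ` with `nᵢ ≥ 1`
and `aᵢ` dyadic rationals (numeric short games), with `ℓ` blue flowers (`aᵢ > 0`) and
`r` red flowers (`aᵢ < 0`): `ℓ - r ≥ 2` gives a Left win, `ℓ - r ≥ 1` gives a Left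
win moving first, `ℓ - r ≤ -1` gives a Right win moving first, and `ℓ - r ≤ -2`
gives a Right win, all under normal play. -/
theorem blueFlowerPloy (k : ℕ) (n : Fin k → ℕ) (hn : ∀ i, 1 ≤ n i)
    (a : Fin k → PGame) (ha : ∀ i, (a i).Numeric) (hs : ∀ i, Short (a i)) :
    let G := psum fun i => ordinalSum (nim (n i : Ordinal)) (a i)
    let l : ℤ := Nat.card {i : Fin k // 0 < a i}
    let r : ℤ := Nat.card {i : Fin k // a i < 0}
    (2 ≤ l - r → 0 < G) ∧ (1 ≤ l - r → 0 ⧏ G) ∧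
      (l - r ≤ -1 → G ⧏ 0) ∧ (l - r ≤ -2 → G < 0) := by
  classical
  intro G l r
  set g : Fin k → BFP.Comp := fun i => BFP.Comp.flower (n i) (a i) with hgdef
  have hpos : BFP.Pos (List.ofFn g) := by
    intro c hc
    rw [List.mem_ofFn] at hc
    obtain ⟨i, rfl⟩ := hc
    exact ⟨hn i, ha i⟩
  have hequiv : G ≈ BFP.val (List.ofFn g) := BFP.psum_equiv_val g
  have hl : l = (Nat.card {i : Fin k // 0 < a i} : ℤ) := rfl
  have hr : r = (Nat.card {i : Fin k // a i < 0} : ℤ) := rfl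
  have hbl : BFP.bl (List.ofFn g) = Nat.card {i : Fin k // 0 < a i} := by
    rw [BFP.bl_ofFn, Nat.card_eq_fintype_card, Fintype.card_subtype,
      Finset.card_eq_sum_ones, Finset.sum_filter]
    refine Finset.sum_congr rfl fun i _ => ?_
    by_cases hp : 0 < a i
    · rw [if_pos hp]
      exact (BFP.stats_blue hp).1
    · rw [if_neg hp]
      exact (if_neg hp : (BFP.Comp.flower (n i) (a i)).blc = 0)
  have hrd : BFP.rd (List.ofFn g) = Nat.card {i : Fin k // a i < 0} := by
    rw [BFP.rd_ofFn, Nat.card_eq_fintype_card, Fintype.card_subtype,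
      Finset.card_eq_sum_ones, Finset.sum_filter]
    refine Finset.sum_congr rfl fun i _ => ?_
    by_cases hp : a i < 0
    · rw [if_pos hp]
      exact (BFP.stats_red hp).2.1
    · rw [if_neg hp]
      exact (if_neg hp : (BFP.Comp.flower (n i) (a i)).rdc = 0)
  have M := BFP.main (List.ofFn g) hpos
  refine ⟨fun h => ?_, fun h => ?_, fun h => ?_, fun h => ?_⟩
  · rw [lt_congr_right hequiv, lt_iff_le_and_lf]
    exact ⟨M.p1 (by omega), M.p2 (by omega)⟩
  · rw [lf_congr_right hequiv]
    exact M.p2 (by omega)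
  · rw [lf_congr_left hequiv]
    exact M.p4 (by omega)
  · rw [lt_congr_left hequiv, lt_iff_le_and_lf]
    exact ⟨M.p3 (by omega), M.p4 (by omega)⟩
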